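/- arXiv:1605.05630 — 9 statements merged into one kernel-verified Lean document; each statement's English description precedes it below -/
import Mathlib

section
/- The G_δ modification of the product space (2^ω)^{𝔠⁺} (i.e., the topology generated by G_δ subsets of the usual product topology) is homeomorphic to the G_δ modification of D(𝔠)^{𝔠⁺}, where D(𝔠) is the discrete space of cardinality continuum. -/
open Set Cardinal TopologicalSpace Topology

universe u

section Aux

variable {α β : Type*} [TopologicalSpace α] [TopologicalSpace β]

/-- Preimage of a Gδ set under a continuous map is Gδ. -/
lemma isGδ_preimage {f : α → β} (hf : Continuous f) {s : Set β} (hs : IsGδ s) :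
    IsGδ (f ⁻¹' s) := by
  obtain ⟨T, hTo, hTc, rfl⟩ := hs
  rw [preimage_sInter]
  exact IsGδ.biInter_of_isOpen hTc fun t ht => (hTo t ht).preimage hf

/-- Characterization of open sets in the Gδ modification. -/
lemma isOpen_gdelta_mod_iff {S : Set α} :
    IsOpen[generateFrom {s : Set α | IsGδ s}] S ↔
      ∀ x ∈ S, ∃ g : Set α, IsGδ g ∧ x ∈ g ∧ g ⊆ S := by
  constructor
  · intro h
    induction h with
    | basic u hu => exact fun x hx => ⟨u, hu, hx, le_refl u⟩
    | univ => exact fun x _ => ⟨univ, IsGδ.univ, mem_univ x, le_refl _⟩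
    | inter u v _ _ ihu ihv =>
      intro x hx
      obtain ⟨g1, hg1, hxg1, hg1u⟩ := ihu x hx.1
      obtain ⟨g2, hg2, hxg2, hg2v⟩ := ihv x hx.2
      exact ⟨g1 ∩ g2, hg1.inter hg2, ⟨hxg1, hxg2⟩, inter_subset_inter hg1u hg2v⟩
    | sUnion T _ ih =>
      intro x hx
      obtain ⟨u, huT, hxu⟩ := hx
      obtain ⟨g, hg, hxg, hgu⟩ := ih u huT x hxu
      exact ⟨g, hg, hxg, hgu.trans (subset_sUnion_of_mem huT)⟩
  · intro h
    choose g hg hxg hgS using h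
    have hS : S = ⋃₀ (Set.range fun x : S => g x x.2) := by
      rw [sUnion_range]
      apply Subset.antisymm
      · intro x hx
        exact mem_iUnion.2 ⟨⟨x, hx⟩, hxg x hx⟩
      · exact iUnion_subset fun x => hgS x x.2
    rw [hS]
    exact TopologicalSpace.GenerateOpen.sUnion _
      (by rintro t ⟨x, rfl⟩; exact TopologicalSpace.GenerateOpen.basic _ (hg x x.2))

/-- The Gδ modification is a P-space: countable intersections of open sets are open. -/
lemma isOpen_gdelta_mod_iInter {ι : Sort*} [Countable ι] {f : ι → Set α}
    (hf : ∀ i, IsOpen[generateFrom {s : Set α | IsGδ s}] (f i)) :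
    IsOpen[generateFrom {s : Set α | IsGδ s}] (⋂ i, f i) := by
  rw [isOpen_gdelta_mod_iff]
  intro x hx
  choose g hg hxg hgf using fun i =>
    (isOpen_gdelta_mod_iff.1 (hf i)) x (mem_iInter.1 hx i)
  exact ⟨⋂ i, g i, IsGδ.iInter hg, mem_iInter.2 hxg, iInter_mono fun i => hgf i⟩

/-- Key lemma: a coordinatewise map between products is continuous from the Gδ
modification to the Gδ modification, provided single-coordinate "singleton cylinders"
are Gδ in the source. -/
lemma continuous_gdelta_mod {I : Type*} (f : α → β) (hG : ∀ c : α, IsGδ {a : α | a = c}) :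
    Continuous[generateFrom {s : Set (I → α) | IsGδ s},
      generateFrom {s : Set (I → β) | IsGδ s}] (fun x i => f (x i)) := by
  set ψ : (I → α) → (I → β) := fun x i => f (x i) with hψ
  rw [continuous_generateFrom_iff]
  rintro s ⟨T, hTo, hTc, rfl⟩
  rw [preimage_sInter]
  have hre : ⋂ t ∈ T, ψ ⁻¹' t = ⋂ t : T, ψ ⁻¹' (t : Set (I → β)) := by
    rw [iInter_coe_set]
  rw [hre]
  have := hTc.to_subtype
  apply isOpen_gdelta_mod_iInter
  rintro ⟨u, hu⟩
  -- It suffices to show: preimage of an open set is open in the Gδ modification.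
  have hU : IsOpen u := hTo u hu
  rw [isOpen_gdelta_mod_iff]
  intro x hx
  obtain ⟨F, v, hv, hsub⟩ := isOpen_pi_iff.1 hU (ψ x) hx
  refine ⟨⋂ i ∈ (F : Set I), (fun z : I → α => z i) ⁻¹' {a : α | a = x i}, ?_, ?_, ?_⟩
  · exact IsGδ.biInter (F : Set I).to_countable fun i _ =>
      isGδ_preimage (continuous_apply i) (hG (x i))
  · exact mem_iInter₂.2 fun i _ => rfl
  · intro z hz
    apply hsub
    intro i hi
    have hzi : z i = x i := mem_iInter₂.1 hz i hi
    show f (z i) ∈ v i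
    rw [hzi]
    exact (hv i hi).2

end Aux

/-- The G_δ modification of `(2^ω)^{𝔠⁺}` is homeomorphic to the G_δ modification of
`D(𝔠)^{𝔠⁺}`, where `D(𝔠)` is the discrete space of cardinality continuum. -/
theorem gdelta_modification_homeomorph
    (I : Type u) (hI : #I = Order.succ continuum)
    (D : Type u) [TopologicalSpace D] [DiscreteTopology D] (hD : #D = continuum) :
    Nonempty (@Homeomorph (I → ℕ → Bool) (I → D)
      (TopologicalSpace.generateFrom {s : Set (I → ℕ → Bool) | IsGδ s})
      (TopologicalSpace.generateFrom {s : Set (I → D) | IsGδ s})) := by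
  have hc : #(ℕ → Bool) = continuum := by
    rw [Cardinal.mk_arrow, Cardinal.mk_bool, Cardinal.mk_nat]
    simp [← Cardinal.two_power_aleph0]
  obtain ⟨e⟩ : Nonempty ((ℕ → Bool) ≃ D) := by
    apply Cardinal.lift_mk_eq'.1
    rw [hc, hD]
    simp [Cardinal.lift_continuum]
  have h1 : Continuous[generateFrom {s : Set (I → ℕ → Bool) | IsGδ s},
      generateFrom {s : Set (I → D) | IsGδ s}] (fun x i => e (x i)) :=
    continuous_gdelta_mod (I := I) e (fun c => IsGδ.singleton c)
  have h2 : Continuous[generateFrom {s : Set (I → D) | IsGδ s},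
      generateFrom {s : Set (I → ℕ → Bool) | IsGδ s}] (fun x i => e.symm (x i)) :=
    continuous_gdelta_mod (I := I) e.symm (fun c => (isOpen_discrete _).isGδ)
  exact ⟨@Homeomorph.mk _ _ (generateFrom {s : Set (I → ℕ → Bool) | IsGδ s})
    (generateFrom {s : Set (I → D) | IsGδ s}) (Equiv.piCongrRight fun _ => e) h1 h2⟩
end

section
/- The family of sets [s] = {f ∈ D(𝔠)^{𝔠⁺} : s ⊆ f}, where s ranges over countable partial functions from 𝔠⁺ to D(𝔠) that are not injective, covers D(𝔠)^{𝔠⁺}, but no subfamily of cardinality at most 𝔠 covers D(𝔠)^{𝔠⁺}. -/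
open Set Cardinal TopologicalSpace

universe u v

/-! A function `𝔠⁺ → D(𝔠)` cannot be injective, so it lies in `[s]` for `s` its restriction to
two points it identifies. Conversely, fix for each member of a family of at most `𝔠` basic sets
two points identified by its partial function; these are at most `𝔠` points, so some total
function is injective on all of them, and it extends none of the partial functions. -/

section PartialFunctions

variable {α : Type u} {β : Type v}

/-- The paper's `[s]`, with partial functions encoded as `α → Option β`. -/
def extensions (s : α → Option β) : Set (α → β) :=
  {f | ∀ a b, s a = some b → f a = b}

def NonInjectivePartial (s : α → Option β) : Prop :=
  ∃ a a', a ≠ a' ∧ s a ≠ none ∧ s a = s a'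

theorem notMem_extensions_of_injOn {s : α → Option β} {a a' : α} (ha : a ≠ a')
    (hs : s a ≠ none) (hss : s a = s a') {f : α → β} (hf : InjOn f {a, a'}) :
    f ∉ extensions s := by
  intro hfs
  obtain ⟨b, hb⟩ := Option.ne_none_iff_exists'.1 hs
  have hfa : f a = b := hfs a b hb
  have hfa' : f a' = b := hfs a' b (hss ▸ hb)
  exact ha (hf (mem_insert a _) (mem_insert_of_mem a rfl) (hfa.trans hfa'.symm))

theorem exists_nonInjectivePartial_mem_extensions {f : α → β} (hf : ¬ Function.Injective f) :
    ∃ s : α → Option β, {a | s a ≠ none}.Finite ∧ NonInjectivePartial s ∧ f ∈ extensions s := by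
  classical
  obtain ⟨a, a', hfa, ha⟩ := Function.not_injective_iff.1 hf
  refine ⟨fun x => if x = a ∨ x = a' then some (f x) else none, ?_,
    ⟨a, a', ha, by simp, by simp [hfa]⟩, ?_⟩
  · refine (toFinite {a, a'}).subset fun x hx => ?_
    by_contra hxa
    simp_all
  · intro x b hx
    dsimp only at hx
    split_ifs at hx
    exact Option.some.inj hx

theorem exists_injOn_of_lift_mk_le [Nonempty β] {s : Set α} (h : lift.{v} #s ≤ lift.{u} #β) :
    ∃ f : α → β, InjOn f s := by
  obtain ⟨g⟩ := lift_mk_le'.1 h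
  refine ⟨Function.extend Subtype.val g fun _ => Classical.arbitrary β, fun x hx y hy hxy => ?_⟩
  rw [Subtype.val_injective.extend_apply g _ ⟨x, hx⟩,
    Subtype.val_injective.extend_apply g _ ⟨y, hy⟩] at hxy
  exact congrArg Subtype.val (g.injective hxy)

end PartialFunctions

theorem exists_forall_notMem_extensions {ι α β : Type u} [Infinite β] (s : ι → α → Option β)
    (hs : ∀ i, NonInjectivePartial (s i)) (hι : #ι ≤ #β) :
    ∃ f : α → β, ∀ i, f ∉ extensions (s i) := by
  choose a a' ha hsa hss using hs
  have hW : #(range a ∪ range a' : Set α) ≤ #β :=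
    calc #(range a ∪ range a' : Set α) ≤ #(range a) + #(range a') := mk_union_le _ _
      _ ≤ #β + #β := add_le_add (mk_range_le.trans hι) (mk_range_le.trans hι)
      _ = #β := add_eq_self (aleph0_le_mk β)
  obtain ⟨f, hf⟩ := exists_injOn_of_lift_mk_le (lift_le.2 hW)
  refine ⟨f, fun i => notMem_extensions_of_injOn (ha i) (hsa i) (hss i) (hf.mono ?_)⟩
  exact insert_subset (Or.inl (mem_range_self i))
    (singleton_subset_iff.2 (Or.inr (mem_range_self i)))

/-- The family of sets `[s] = {f ∈ D(𝔠)^{𝔠⁺} : s ⊆ f}`, where `s` ranges over countable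
partial functions from `𝔠⁺` to `D(𝔠)` that are not injective, covers `D(𝔠)^{𝔠⁺}`, but no
subfamily of cardinality at most `𝔠` covers `D(𝔠)^{𝔠⁺}`. Partial functions are encoded as
functions `I → Option D`. -/
theorem cover_no_continuum_subcover
    (I : Type u) (hI : #I = Order.succ continuum)
    (D : Type u) (hD : #D = continuum)
    (𝒰 : Set (Set (I → D)))
    (h𝒰 : 𝒰 = {T | ∃ s : I → Option D, {i | s i ≠ none}.Countable ∧
      (∃ i j : I, i ≠ j ∧ s i ≠ none ∧ s i = s j) ∧
      T = {f : I → D | ∀ i : I, ∀ d : D, s i = some d → f i = d}}) :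
    ⋃₀ 𝒰 = Set.univ ∧ ∀ 𝒱 ⊆ 𝒰, #𝒱 ≤ continuum → ⋃₀ 𝒱 ≠ Set.univ := by
  have hDI : #D < #I := hD ▸ hI ▸ Order.lt_succ continuum
  have : Infinite D := infinite_iff.2 (hD ▸ aleph0_le_continuum)
  subst h𝒰
  constructor
  · refine eq_univ_of_forall fun f => ?_
    have hf : ¬ Function.Injective f := fun hf => (mk_le_of_injective hf).not_gt hDI
    obtain ⟨s, hfin, hs, hfs⟩ := exists_nonInjectivePartial_mem_extensions hf
    exact ⟨_, ⟨s, hfin.countable, hs, rfl⟩, hfs⟩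
  · intro 𝒱 h𝒱 h𝒱card hcover
    choose s _ hs hsT using fun T : 𝒱 => h𝒱 T.2
    obtain ⟨f, hf⟩ := exists_forall_notMem_extensions s hs (hD ▸ h𝒱card)
    obtain ⟨T, hT, hfT⟩ := hcover ▸ mem_univ f
    exact hf ⟨T, hT⟩ ((congrArg (f ∈ ·) (hsT ⟨T, hT⟩)).mp hfT)
end

section
/- The Lindelöf degree of the G_δ modification of the compact space (2^ω)^{𝔠⁺} equals 𝔠⁺. In particular, there is a G_δ cover of (2^ω)^{𝔠⁺} with no subcover of cardinality at most 𝔠. -/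
/-!
Every set open in the Gδ modification of a product contains, around each of its points `x`, the
set of points agreeing with `x` on some countable set of coordinates. These countable boxes refine
any open cover, and in `(2^ω)^{𝔠⁺}` there are at most `(𝔠⁺ · 𝔠)^ℵ₀ = 𝔠⁺` of them: a sequence in
`𝔠⁺` is bounded by regularity, so `(𝔠⁺)^ℵ₀ ≤ 𝔠⁺ · 𝔠^ℵ₀`.

Conversely, no point of `(2^ω)^{𝔠⁺}` is injective, so the Gδ sets `{x | x i = x j}`, `i ≠ j`,
cover it. At most `𝔠` of them involve at most `𝔠` coordinates, and a point that is injective on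
these coordinates lies in none of them.
-/

open Set Cardinal TopologicalSpace
open scoped Topology

universe u v

namespace Cardinal

theorem exists_forall_lt_of_aleph0_lt_cof {α : Type*} [LinearOrder α] (h : ℵ₀ < Order.cof α)
    (g : ℕ → α) : ∃ b, ∀ n, g n < b := by
  by_contra! hg
  have hcofinal : IsCofinal (range g) := fun a ↦
    let ⟨n, hn⟩ := hg a
    ⟨g n, mem_range_self n, hn⟩
  exact (Order.cof_le hcofinal |>.trans (countable_range g).le_aleph0).not_gt h

theorem succ_power_aleph0_le {c : Cardinal.{u}} (hc : ℵ₀ ≤ c) :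
    Order.succ c ^ ℵ₀ ≤ Order.succ c * c ^ ℵ₀ := by
  set W := (Order.succ c).ord.ToType
  have hW : #W = Order.succ c := mk_ord_toType _
  have hcof : ℵ₀ < Order.cof W := by
    rw [← Ordinal.cof_type, Ordinal.type_toType]
    exact (Order.lt_succ_of_le hc).trans_le (isRegular_succ hc).le_cof_ord
  have hsurj : Function.Surjective fun g : (Σ b : W, ℕ → Iio b) ↦ fun n ↦ (g.2 n : W) := by
    intro g
    obtain ⟨b, hb⟩ := exists_forall_lt_of_aleph0_lt_cof hcof g
    exact ⟨⟨b, fun n ↦ ⟨g n, hb n⟩⟩, rfl⟩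
  calc Order.succ c ^ ℵ₀ = #(ℕ → W) := by simp [hW]
    _ ≤ #(Σ b : W, ℕ → Iio b) := mk_le_of_surjective hsurj
    _ ≤ sum fun _ : W ↦ c ^ ℵ₀ := by
        rw [mk_sigma]
        refine sum_le_sum _ _ fun b ↦ ?_
        have hb := mk_Iio_lt b (by rw [hW, Ordinal.type_toType])
        rw [hW, Order.lt_succ_iff] at hb
        simpa using power_le_power_right (c := ℵ₀) hb
    _ = Order.succ c * c ^ ℵ₀ := by rw [sum_const', hW]

theorem succ_continuum_power_aleph0 : Order.succ 𝔠 ^ ℵ₀ = Order.succ (𝔠 : Cardinal.{u}) := by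
  have hsucc : ℵ₀ ≤ Order.succ (𝔠 : Cardinal.{u}) := aleph0_le_continuum.trans (Order.le_succ _)
  refine le_antisymm ?_ (self_le_power _ one_le_aleph0)
  calc Order.succ 𝔠 ^ ℵ₀ ≤ Order.succ 𝔠 * 𝔠 ^ ℵ₀ := succ_power_aleph0_le aleph0_le_continuum
    _ = Order.succ 𝔠 := by
        rw [continuum_power_aleph0, mul_eq_left hsucc (Order.le_succ _) continuum_ne_zero]

end Cardinal

section CountableBoxes

variable {ι : Type*} {π : ι → Type*} [∀ i, TopologicalSpace (π i)]

theorem IsOpen.exists_finite_pi_singleton_subset {U : Set (∀ i, π i)} (hU : IsOpen U)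
    {x : ∀ i, π i} (hx : x ∈ U) : ∃ S : Set ι, S.Finite ∧ S.pi (fun i ↦ {x i}) ⊆ U := by
  obtain ⟨F, u, hu, hFu⟩ := isOpen_pi_iff.mp hU x hx
  refine ⟨F, F.finite_toSet, Subset.trans (pi_mono fun i hi ↦ ?_) hFu⟩
  simpa using (hu i hi).2

theorem IsGδ.exists_countable_pi_singleton_subset {U : Set (∀ i, π i)} (hU : IsGδ U)
    {x : ∀ i, π i} (hx : x ∈ U) :
    ∃ S : Set ι, S.Countable ∧ S.pi (fun i ↦ {x i}) ⊆ U := by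
  obtain ⟨T, hTopen, hTcount, rfl⟩ := hU
  have : ∀ t : T, ∃ S : Set ι, S.Finite ∧ S.pi (fun i ↦ {x i}) ⊆ t := fun t ↦
    (hTopen t t.2).exists_finite_pi_singleton_subset (hx t t.2)
  choose S hSfin hSsub using this
  have : Countable T := hTcount.to_subtype
  refine ⟨⋃ t, S t, countable_iUnion fun t ↦ (hSfin t).countable, fun y hy t ht ↦ ?_⟩
  exact hSsub ⟨t, ht⟩ fun i hi ↦ hy i (mem_iUnion_of_mem _ hi)

theorem exists_countable_pi_singleton_subset_of_isOpen_generateFrom_isGδ {U : Set (∀ i, π i)}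
    (hU : IsOpen[generateFrom {s | IsGδ s}] U) {x : ∀ i, π i} (hx : x ∈ U) :
    ∃ S : Set ι, S.Countable ∧ S.pi (fun i ↦ {x i}) ⊆ U := by
  induction hU generalizing x with
  | basic G hG => exact hG.exists_countable_pi_singleton_subset hx
  | univ => exact ⟨∅, countable_empty, subset_univ _⟩
  | inter s t _ _ ihs iht =>
    obtain ⟨S, hS, hSs⟩ := ihs hx.1
    obtain ⟨T, hT, hTt⟩ := iht hx.2
    exact ⟨S ∪ T, hS.union hT, fun y hy ↦
      ⟨hSs fun i hi ↦ hy i (.inl hi), hTt fun i hi ↦ hy i (.inr hi)⟩⟩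
  | sUnion 𝒮 _ ih =>
    obtain ⟨u, hu, hxu⟩ := hx
    obtain ⟨S, hS, hSu⟩ := ih u hu hxu
    exact ⟨S, hS, hSu.trans (subset_sUnion_of_mem hu)⟩

end CountableBoxes

theorem exists_subcover_card_le_of_refines {X K : Type u} {𝒰 : Set (Set X)} (C : K → Set X)
    (hC : ∀ x, ∃ k, x ∈ C k ∧ ∃ u ∈ 𝒰, C k ⊆ u) :
    ∃ 𝒱 ⊆ 𝒰, #𝒱 ≤ #K ∧ ⋃₀ 𝒱 = Set.univ := by
  choose f hf𝒰 hCf using fun k : {k // ∃ u ∈ 𝒰, C k ⊆ u} ↦ k.2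
  refine ⟨range f, range_subset_iff.mpr hf𝒰, mk_range_le.trans (mk_subtype_le _), ?_⟩
  refine eq_univ_of_forall fun x ↦ ?_
  obtain ⟨k, hxk, hk⟩ := hC x
  exact ⟨f ⟨k, hk⟩, mem_range_self _, hCf _ hxk⟩

theorem exists_subcover_card_le_of_isOpen_generateFrom_isGδ {ι : Type*} {π : ι → Type*}
    [∀ i, TopologicalSpace (π i)] (𝒰 : Set (Set (∀ i, π i)))
    (h𝒰 : ∀ u ∈ 𝒰, IsOpen[generateFrom {s | IsGδ s}] u) (hcover : ⋃₀ 𝒰 = Set.univ) :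
    ∃ 𝒱 ⊆ 𝒰, #𝒱 ≤ max #(Σ i, π i) ℵ₀ ^ ℵ₀ ∧ ⋃₀ 𝒱 = Set.univ := by
  obtain ⟨𝒱, h𝒱𝒰, h𝒱card, h𝒱cover⟩ := exists_subcover_card_le_of_refines (𝒰 := 𝒰)
    (fun A : {A : Set (Σ i, π i) // #A ≤ ℵ₀} ↦ {y | ∀ p ∈ A.1, y p.1 = p.2}) fun x ↦ by
      obtain ⟨u, hu, hxu⟩ := hcover.symm ▸ mem_univ x
      obtain ⟨S, hS, hSu⟩ :=
        exists_countable_pi_singleton_subset_of_isOpen_generateFrom_isGδ (h𝒰 u hu) hxu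
      refine ⟨⟨(fun i ↦ ⟨i, x i⟩) '' S, (hS.image _).le_aleph0⟩, ?_, u, hu, ?_⟩
      · rintro _ ⟨i, -, rfl⟩
        rfl
      · exact fun y hy ↦ hSu fun i hi ↦ hy _ (mem_image_of_mem _ hi)
  exact ⟨𝒱, h𝒱𝒰, h𝒱card.trans (mk_bounded_set_le _ _), h𝒱cover⟩

def coordDiagonals (ι Y : Type*) : Set (Set (ι → Y)) :=
  {u | ∃ i j, i ≠ j ∧ u = {x | x i = x j}}

section CoordDiagonals

variable {ι : Type u} {Y : Type v}

theorem isGδ_of_mem_coordDiagonals [TopologicalSpace Y] [MetrizableSpace Y] {u : Set (ι → Y)}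
    (hu : u ∈ coordDiagonals ι Y) : IsGδ u := by
  obtain ⟨i, j, -, rfl⟩ := hu
  have hf : Continuous fun x : ι → Y ↦ (x i, x j) := by fun_prop
  exact isClosed_diagonal.isGδ.preimage hf

theorem sUnion_coordDiagonals_eq_univ (h : lift.{u} #Y < lift.{v} #ι) :
    ⋃₀ coordDiagonals ι Y = Set.univ := by
  refine eq_univ_of_forall fun x ↦ ?_
  have hx : ¬ x.Injective := fun hx ↦ (lift_mk_le_lift_mk_of_injective hx).not_gt h
  obtain ⟨i, j, hxij, hij⟩ := Function.not_injective_iff.mp hx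
  exact ⟨_, ⟨i, j, hij, rfl⟩, hxij⟩

theorem sUnion_ne_univ_of_subset_coordDiagonals (hY : ℵ₀ ≤ #Y) {𝒱 : Set (Set (ι → Y))}
    (h𝒱 : 𝒱 ⊆ coordDiagonals ι Y) (hcard : #𝒱 ≤ lift.{u} #Y) : ⋃₀ 𝒱 ≠ Set.univ := by
  choose i j hij hv using fun v : 𝒱 ↦ h𝒱 v.2
  set f : 𝒱 × Bool → ι := fun q ↦ if q.2 then i q.1 else j q.1
  set T : Set ι := range f
  have hcardY : #(𝒱 × Bool) ≤ lift.{u} #Y := calc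
    #(𝒱 × Bool) = #𝒱 * 2 := by simp
    _ ≤ lift.{u} #Y * lift.{u} #Y :=
        mul_le_mul' hcard (by simpa using (natCast_lt_aleph0 (n := 2)).le.trans hY)
    _ = lift.{u} #Y := mul_eq_self (by simpa using hY)
  obtain ⟨g⟩ := (lift_mk_le' (α := 𝒱 × Bool) (β := Y)).mp (by rwa [lift_id', lift_umax])
  let e : T ↪ Y := ⟨g ∘ rangeSplitting f, g.injective.comp (rangeSplitting_injective f)⟩
  have : Infinite Y := infinite_iff.mpr hY
  set x : ι → Y := Function.extend Subtype.val e (fun _ ↦ Classical.arbitrary Y)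
  have hx : ∀ k (hk : k ∈ T), x k = e ⟨k, hk⟩ := fun k hk ↦
    Subtype.val_injective.extend_apply _ _ ⟨k, hk⟩
  intro hcover
  obtain ⟨v, hv𝒱, hxv⟩ := hcover.symm ▸ mem_univ x
  lift v to 𝒱 using hv𝒱
  rw [hv v] at hxv
  have hi : i v ∈ T := ⟨(v, true), rfl⟩
  have hj : j v ∈ T := ⟨(v, false), rfl⟩
  exact hij v <| congrArg Subtype.val <| e.injective <| (hx _ hi).symm.trans (hxv.trans (hx _ hj))

end CoordDiagonals

/-- The Lindelöf degree of the G_δ modification of the compact space `(2^ω)^{𝔠⁺}` equals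
`𝔠⁺`: every open cover of the G_δ modification has a subcover of size at most `𝔠⁺`, and there
is a G_δ cover with no subcover of cardinality at most `𝔠`. -/
theorem lindelof_degree_gdelta_cantor_power
    (I : Type u) (hI : #I = Order.succ continuum) :
    (∀ 𝒰 : Set (Set (I → ℕ → Bool)),
      (∀ u ∈ 𝒰,
        @IsOpen _ (TopologicalSpace.generateFrom {s : Set (I → ℕ → Bool) | IsGδ s}) u) →
      ⋃₀ 𝒰 = Set.univ →
      ∃ 𝒱 ⊆ 𝒰, #𝒱 ≤ Order.succ continuum ∧ ⋃₀ 𝒱 = Set.univ) ∧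
    (∃ 𝒰 : Set (Set (I → ℕ → Bool)), (∀ u ∈ 𝒰, IsGδ u) ∧ ⋃₀ 𝒰 = Set.univ ∧
      ∀ 𝒱 ⊆ 𝒰, #𝒱 ≤ continuum → ⋃₀ 𝒱 ≠ Set.univ) := by
  have hcantor : #(ℕ → Bool) = 𝔠 := by simp
  have hsigma : #(Σ _ : I, ℕ → Bool) = Order.succ 𝔠 := by
    rw [mk_sigma, sum_const, hI, hcantor, lift_continuum, lift_uzero]
    exact mul_eq_left (aleph0_le_continuum.trans (Order.le_succ _)) (Order.le_succ _)
      continuum_ne_zero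
  refine ⟨fun 𝒰 h𝒰 hcover ↦ ?_, ?_⟩
  · obtain ⟨𝒱, h𝒱𝒰, h𝒱card, h𝒱cover⟩ :=
      exists_subcover_card_le_of_isOpen_generateFrom_isGδ 𝒰 h𝒰 hcover
    refine ⟨𝒱, h𝒱𝒰, h𝒱card.trans ?_, h𝒱cover⟩
    rw [hsigma, max_eq_left (aleph0_le_continuum.trans (Order.le_succ _)),
      succ_continuum_power_aleph0]
  · refine ⟨coordDiagonals I (ℕ → Bool), fun u hu ↦ isGδ_of_mem_coordDiagonals hu,
      sUnion_coordDiagonals_eq_univ ?_, fun 𝒱 h𝒱 hcard ↦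
        sUnion_ne_univ_of_subset_coordDiagonals ?_ h𝒱 ?_⟩
    · simp [hI]
    · simpa using aleph0_le_continuum
    · simpa using hcard
end

section
/- For every infinite cardinal κ, the product space D(κ)^{κ⁺} with the product topology has Lindelöf degree κ⁺, where D(κ) is the discrete space of cardinality κ. -/
open Set Cardinal TopologicalSpace

universe u

/-- (Mycielski) For every infinite cardinal `κ`, the product space `D(κ)^{κ⁺}` of discrete
spaces has Lindelöf degree `κ⁺`: every open cover has a subcover of size at most `κ⁺`, and
some open cover has no subcover of size at most `κ`. -/
theorem lindelof_degree_discrete_power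
    (κ : Cardinal.{u}) (hκ : ℵ₀ ≤ κ)
    (I : Type u) (hI : #I = Order.succ κ)
    (D : Type u) [TopologicalSpace D] [DiscreteTopology D] (hD : #D = κ) :
    (∀ 𝒰 : Set (Set (I → D)), (∀ u ∈ 𝒰, IsOpen u) → ⋃₀ 𝒰 = Set.univ →
      ∃ 𝒱 ⊆ 𝒰, #𝒱 ≤ Order.succ κ ∧ ⋃₀ 𝒱 = Set.univ) ∧
    (∃ 𝒰 : Set (Set (I → D)), (∀ u ∈ 𝒰, IsOpen u) ∧ ⋃₀ 𝒰 = Set.univ ∧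
      ∀ 𝒱 ⊆ 𝒰, #𝒱 ≤ κ → ⋃₀ 𝒱 ≠ Set.univ) := by
  classical
  have hκsucc : ℵ₀ ≤ Order.succ κ := hκ.trans (Order.le_succ κ)
  have hDne : Nonempty D :=
    Cardinal.mk_ne_zero_iff.mp (by rw [hD]; exact (aleph0_pos.trans_le hκ).ne')
  have hIinf : Infinite I := Cardinal.infinite_iff.mpr (by rw [hI]; exact hκsucc)
  have hκltsucc : κ < Order.succ κ := Order.lt_succ κ
  constructor
  · intro 𝒰 hopen hcover
    obtain ⟨d₀⟩ := hDne
    have hx0 : (fun _ : I => d₀) ∈ ⋃₀ 𝒰 := by rw [hcover]; trivial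
    obtain ⟨u₀, hu₀, -⟩ := hx0
    -- cylinder sets
    set C : (Σ s : Finset I, ({i // i ∈ s} → D)) → Set (I → D) :=
      fun t => {f | ∀ i : I, ∀ h : i ∈ t.1, f i = t.2 ⟨i, h⟩} with hC
    set F : (Σ s : Finset I, ({i // i ∈ s} → D)) → Set (I → D) :=
      fun t => if h : ∃ u ∈ 𝒰, C t ⊆ u then h.choose else u₀ with hF
    have hFmem : ∀ t, F t ∈ 𝒰 := by
      intro t
      by_cases h : ∃ u ∈ 𝒰, C t ⊆ u
      · simp only [hF, dif_pos h]; exact h.choose_spec.1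
      · simp only [hF, dif_neg h]; exact hu₀
    refine ⟨Set.range F, ?_, ?_, ?_⟩
    · rintro v ⟨t, rfl⟩; exact hFmem t
    · calc #(Set.range F) ≤ #(Σ s : Finset I, ({i // i ∈ s} → D)) := Cardinal.mk_range_le
        _ = Cardinal.sum (fun s : Finset I => #({i // i ∈ s} → D)) := Cardinal.mk_sigma _
        _ ≤ Cardinal.sum (fun _ : Finset I => κ) := by
            refine Cardinal.sum_le_sum _ _ (fun s => ?_)
            rw [← Cardinal.power_def]
            have : #{i // i ∈ s} = (s.card : Cardinal) := Cardinal.mk_coe_finset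
            rw [this, hD]
            exact Cardinal.power_nat_le hκ
        _ = #(Finset I) * κ := Cardinal.sum_const' _ _
        _ = Order.succ κ * κ := by rw [Cardinal.mk_finset_of_infinite, hI]
        _ ≤ Order.succ κ * Order.succ κ :=
            mul_le_mul_right (hκltsucc.le) _
        _ = Order.succ κ := Cardinal.mul_eq_self hκsucc
    · apply Set.eq_univ_of_forall
      intro x
      have hx : x ∈ ⋃₀ 𝒰 := by rw [hcover]; trivial
      obtain ⟨u, hu, hxu⟩ := hx
      obtain ⟨s, w, hw, hws⟩ := (isOpen_pi_iff.mp (hopen u hu)) x hxu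
      have hsub : C ⟨s, fun i => x i.1⟩ ⊆ u := by
        intro f hf
        apply hws
        intro i hi
        rw [hf i hi]
        exact (hw i hi).2
      have hex : ∃ u ∈ 𝒰, C ⟨s, fun i => x i.1⟩ ⊆ u := ⟨u, hu, hsub⟩
      refine ⟨F ⟨s, fun i => x i.1⟩, ⟨⟨s, fun i => x i.1⟩, rfl⟩, ?_⟩
      have heq : F ⟨s, fun i => x i.1⟩ = hex.choose := by simp only [hF, dif_pos hex]
      rw [heq]
      exact hex.choose_spec.2 (fun i hi => rfl)
  · obtain ⟨d₀⟩ := hDne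
    set U : I → I → D → Set (I → D) := fun i j d => {f | f i = d ∧ f j = d} with hU
    refine ⟨{u | ∃ i j d, i ≠ j ∧ u = U i j d}, ?_, ?_, ?_⟩
    · rintro u ⟨i, j, d, -, rfl⟩
      have hrep : U i j d = ((fun f : I → D => f i) ⁻¹' {d}) ∩ ((fun f : I → D => f j) ⁻¹' {d}) := by
        ext f; simp [hU]
      rw [hrep]
      exact ((isOpen_discrete ({d} : Set D)).preimage (continuous_apply i)).inter
        ((isOpen_discrete ({d} : Set D)).preimage (continuous_apply j))
    · apply Set.eq_univ_of_forall
      intro f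
      have hninj : ¬ Function.Injective f := by
        intro h
        have := Cardinal.mk_le_of_injective h
        rw [hI, hD] at this
        exact absurd this (not_le.mpr hκltsucc)
      simp only [Function.Injective, not_forall] at hninj
      obtain ⟨i, j, hij, hne⟩ := hninj
      exact ⟨U i j (f i), ⟨i, j, f i, hne, rfl⟩, rfl, hij.symm⟩
    · intro 𝒱 hsub hcard hcov
      have hch : ∀ v : 𝒱, ∃ p : I × I × D, p.1 ≠ p.2.1 ∧ (v : Set (I → D)) = U p.1 p.2.1 p.2.2 := by
        rintro ⟨v, hv⟩
        obtain ⟨i, j, d, hij, rfl⟩ := hsub hv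
        exact ⟨⟨i, j, d⟩, hij, rfl⟩
      choose p hp1 hp2 using hch
      set A : Set I := (Set.range fun v : 𝒱 => (p v).1) ∪ (Set.range fun v : 𝒱 => (p v).2.1)
        with hA
      have hAcard : #A ≤ #D := by
        rw [hD]
        calc #A ≤ #(Set.range fun v : 𝒱 => (p v).1) + #(Set.range fun v : 𝒱 => (p v).2.1) :=
              Cardinal.mk_union_le _ _
          _ ≤ #𝒱 + #𝒱 := add_le_add Cardinal.mk_range_le Cardinal.mk_range_le
          _ ≤ κ + κ := add_le_add hcard hcard
          _ = κ := Cardinal.add_eq_self hκ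
      obtain ⟨e⟩ := Cardinal.le_def _ _ |>.mp hAcard
      set f : I → D := fun x => if h : x ∈ A then e ⟨x, h⟩ else d₀ with hf
      have hfU : f ∈ ⋃₀ 𝒱 := by rw [hcov]; trivial
      obtain ⟨v, hv, hfv⟩ := hfU
      have h1 := hp1 ⟨v, hv⟩
      have h2 : v = U (p ⟨v, hv⟩).1 (p ⟨v, hv⟩).2.1 (p ⟨v, hv⟩).2.2 := hp2 ⟨v, hv⟩
      set i := (p ⟨v, hv⟩).1 with hi
      set j := (p ⟨v, hv⟩).2.1 with hj
      have hiA : i ∈ A := Or.inl ⟨⟨v, hv⟩, rfl⟩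
      have hjA : j ∈ A := Or.inr ⟨⟨v, hv⟩, rfl⟩
      rw [h2] at hfv
      obtain ⟨hfi, hfj⟩ := hfv
      have heq : f i = f j := by rw [hfi, hfj]
      simp only [hf, dif_pos hiA, dif_pos hjA] at heq
      exact h1 (Subtype.mk_eq_mk.mp (e.injective heq))
end

section
/- For every infinite cardinal κ, the product space D(κ)^{κ⁺} of discrete spaces contains a closed discrete subset of cardinality κ⁺; hence its extent is κ⁺. -/
/-!
Well-order `I` in type `κ⁺`, so that each initial segment `Iio a` embeds into `D` by some `e a`,
and let `f a b = e a b` for `b < a` and `f a b = e b a` for `a < b`. No `g : I → D` is injective,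
say `g β = g γ` with `β < γ`. If `f a` agrees with `g` at `β` and `γ`, injectivity of `f a` below
`a` forces `a ≤ γ`, and then agreement at any `δ > γ` determines `a`. So every point of `D^I`
has a neighbourhood containing at most one `f a`, and `range f` is closed discrete of size `κ⁺`.
Conversely a discrete subspace injects into any base, and `D^I` has a base indexed by
`Finset (I × D)`, of cardinality `κ⁺`.
-/

open Set Cardinal TopologicalSpace Topology Filter Function

universe u

theorem isClosed_and_isDiscrete_of_forall_finite_inter {X : Type*} [TopologicalSpace X]
    [T1Space X] {S : Set X} (h : ∀ x, ∃ U ∈ 𝓝 x, (U ∩ S).Finite) :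
    IsClosed S ∧ IsDiscrete S := by
  refine isClosed_and_discrete_iff.mpr fun x => ?_
  obtain ⟨U, hU, hfin⟩ := h x
  rw [disjoint_principal_right]
  filter_upwards [nhdsNE_of_nhdsNE_sdiff_finite (mem_nhdsWithin_of_mem_nhds hU) hfin]
    with y hy hyS
  exact hy.2 ⟨hy.1, hyS⟩

theorem mk_le_of_isTopologicalBasis {X : Type u} [TopologicalSpace X] {𝓑 : Set (Set X)}
    (h𝓑 : IsTopologicalBasis 𝓑) (B : Set X) [DiscreteTopology B] : #B ≤ #𝓑 := by
  have hiso : ∀ x : B, ∃ V ∈ 𝓑, V ∩ B = {x.1} := by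
    intro x
    obtain ⟨t, ht, htx⟩ := isOpen_induced_iff.mp (isOpen_discrete {x})
    have hxt : x.1 ∈ t := by simpa using congrArg (x ∈ ·) htx
    obtain ⟨V, hV, hxV, hVt⟩ := h𝓑.exists_subset_of_mem_open hxt ht
    refine ⟨V, hV, subset_antisymm (fun y hy => ?_) (singleton_subset_iff.mpr ⟨hxV, x.2⟩)⟩
    have : (⟨y, hy.2⟩ : B) ∈ Subtype.val ⁻¹' t := hVt hy.1
    rw [htx] at this
    exact congrArg Subtype.val this
  choose V hV hVB using hiso
  refine mk_le_of_injective (f := fun x => (⟨V x, hV x⟩ : 𝓑)) fun x y hxy => ?_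
  have := hVB x
  rw [show V x = V y from congrArg Subtype.val hxy, hVB y] at this
  exact Subtype.ext (singleton_eq_singleton_iff.mp this).symm

theorem isTopologicalBasis_pi_discrete (I D : Type*) [TopologicalSpace D] [DiscreteTopology D] :
    IsTopologicalBasis
      (range fun s : Finset (I × D) => ⋂ p ∈ s, (fun f : I → D => f p.1) ⁻¹' {p.2}) := by
  classical
  refine isTopologicalBasis_of_isOpen_of_nhds ?_ fun g U hgU hU => ?_
  · rintro _ ⟨s, rfl⟩
    exact isOpen_biInter_finset fun p _ => (isOpen_discrete {p.2}).preimage (continuous_apply p.1)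
  · obtain ⟨F, u, hu, hFU⟩ := isOpen_pi_iff.mp hU g hgU
    refine ⟨_, ⟨F.image fun i => (i, g i), rfl⟩, by simp, fun f hf => hFU fun i hi => ?_⟩
    simp only [Finset.mem_image, mem_iInter] at hf
    rw [show f i = g i from hf _ ⟨i, hi, rfl⟩]
    exact (hu i hi).2

theorem mk_le_mk_finset_prod_of_discreteTopology {I D : Type u} [TopologicalSpace D]
    [DiscreteTopology D] (B : Set (I → D)) [DiscreteTopology B] : #B ≤ #(Finset (I × D)) :=
  (mk_le_of_isTopologicalBasis (isTopologicalBasis_pi_discrete I D) B).trans mk_range_le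

section CodingFamily

variable {I D : Type*} [LinearOrder I] (emb : ∀ a : I, Iio a ↪ D) (d₀ : D)

def codingFamily (a b : I) : D :=
  if h : b < a then emb a ⟨b, h⟩ else if h' : a < b then emb b ⟨a, h'⟩ else d₀

variable {emb d₀}

theorem codingFamily_of_lt {a b : I} (h : b < a) : codingFamily emb d₀ a b = emb a ⟨b, h⟩ :=
  dif_pos h

theorem codingFamily_of_gt {a b : I} (h : a < b) : codingFamily emb d₀ a b = emb b ⟨a, h⟩ := by
  rw [codingFamily, dif_neg h.not_gt, dif_pos h]

theorem injOn_codingFamily (a : I) : InjOn (codingFamily emb d₀ a) (Iio a) :=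
    fun b hb c hc hbc => by
  rw [codingFamily_of_lt hb, codingFamily_of_lt hc] at hbc
  exact congrArg Subtype.val ((emb a).injective hbc)

theorem codingFamily_injOn_Iio (b : I) : InjOn (codingFamily emb d₀ · b) (Iio b) :=
    fun a ha a' ha' h => by
  simp only [codingFamily_of_gt ha, codingFamily_of_gt ha'] at h
  exact congrArg Subtype.val ((emb b).injective h)

variable [NoMaxOrder I]

theorem codingFamily_injective : Injective (codingFamily emb d₀) := by
  intro a a' h
  obtain ⟨b, hb⟩ := exists_gt (max a a')
  exact codingFamily_injOn_Iio b (lt_of_le_of_lt (le_max_left a a') hb)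
    (lt_of_le_of_lt (le_max_right a a') hb) (congrFun h b)

theorem exists_finite_codingFamily_agree_subsingleton {g : I → D} (hg : ¬ Injective g) :
    ∃ F : Set I, F.Finite ∧ {a | ∀ i ∈ F, codingFamily emb d₀ a i = g i}.Subsingleton := by
  obtain ⟨β, γ, hβγ, hlt⟩ : ∃ β γ, g β = g γ ∧ β < γ := by
    obtain ⟨β, γ, hβγ, hne⟩ := not_injective_iff.mp hg
    rcases hne.lt_or_gt with h | h
    exacts [⟨β, γ, hβγ, h⟩, ⟨γ, β, hβγ.symm, h⟩]
  obtain ⟨δ, hγδ⟩ := exists_gt γ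
  refine ⟨{β, γ, δ}, toFinite _, ?_⟩
  have hlt_δ : ∀ a ∈ {a | ∀ i ∈ ({β, γ, δ} : Set I), codingFamily emb d₀ a i = g i}, a < δ := by
    intro a ha
    refine lt_of_le_of_lt (not_lt.mp fun hγa => hlt.ne ?_) hγδ
    exact injOn_codingFamily a (hlt.trans hγa) hγa
      ((ha β (by simp)).trans (hβγ.trans (ha γ (by simp)).symm))
  intro a ha a' ha'
  exact codingFamily_injOn_Iio δ (hlt_δ a ha) (hlt_δ a' ha')
    ((ha δ (by simp)).trans (ha' δ (by simp)).symm)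

end CodingFamily

theorem exists_isClosed_discreteTopology_mk_eq {I D : Type u} [LinearOrder I] [NoMaxOrder I]
    [TopologicalSpace D] [DiscreteTopology D] (hIio : ∀ a : I, #(Iio a) ≤ #D) (hD : #D < #I) :
    ∃ C : Set (I → D), IsClosed C ∧ DiscreteTopology C ∧ #C = #I := by
  have emb : ∀ a : I, Iio a ↪ D := fun a => ((Cardinal.le_def _ _).mp (hIio a)).some
  obtain ⟨a⟩ : Nonempty I := mk_ne_zero_iff.mp (zero_le.trans_lt hD).ne'
  obtain ⟨b, hab⟩ := exists_gt a
  set f := codingFamily emb (emb b ⟨a, hab⟩)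
  have hclosed_discrete : IsClosed (range f) ∧ IsDiscrete (range f) := by
    refine isClosed_and_isDiscrete_of_forall_finite_inter fun g => ?_
    obtain ⟨F, hF, hagree⟩ := exists_finite_codingFamily_agree_subsingleton
      (emb := emb) (d₀ := emb b ⟨a, hab⟩) fun hg => (mk_le_of_injective hg).not_gt hD
    refine ⟨F.pi fun i => {g i}, set_pi_mem_nhds hF fun i _ => mem_nhds_discrete.mpr rfl, ?_⟩
    refine (hagree.image f).finite.subset ?_
    rintro _ ⟨hU, a, rfl⟩
    exact ⟨a, fun i hi => hU i hi, rfl⟩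
  exact ⟨range f, hclosed_discrete.1, isDiscrete_iff_discreteTopology.mp hclosed_discrete.2,
    mk_range_eq f codingFamily_injective⟩

theorem exists_linearOrder_noMaxOrder_mk_Iio_lt (α : Type u) [Infinite α] :
    ∃ _ : LinearOrder α, NoMaxOrder α ∧ ∀ x : α, #(Iio x) < #α := by
  obtain ⟨e⟩ : Nonempty (α ≃ (#α).ord.ToType) := Cardinal.eq.mp (by simp)
  let := LinearOrder.lift' e e.injective
  have := Cardinal.noMaxOrder (aleph0_le_mk α)
  refine ⟨_, ⟨fun x => ?_⟩, fun x => ?_⟩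
  · obtain ⟨y, hy⟩ := exists_gt (e x)
    exact ⟨e.symm y, show e x < e (e.symm y) by simpa using hy⟩
  · rw [show Iio x = e ⁻¹' Iio (e x) from rfl, mk_preimage_equiv]
    simpa using mk_Iio_lt (e x) (by simp)

/-- For every infinite cardinal `κ`, the product space `D(κ)^{κ⁺}` of discrete spaces
contains a closed discrete subset of cardinality `κ⁺`; hence its extent (the supremum of
cardinalities of closed discrete subsets) is `κ⁺`. -/
theorem closed_discrete_subset_discrete_power
    (κ : Cardinal.{u}) (hκ : ℵ₀ ≤ κ)
    (I : Type u) (hI : #I = Order.succ κ)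
    (D : Type u) [TopologicalSpace D] [DiscreteTopology D] (hD : #D = κ) :
    (∃ C : Set (I → D), IsClosed C ∧ DiscreteTopology ↥C ∧ #↥C = Order.succ κ) ∧
    sSup {c : Cardinal.{u} |
      ∃ C : Set (I → D), IsClosed C ∧ DiscreteTopology ↥C ∧ #↥C = c} = Order.succ κ := by
  have hκ' : ℵ₀ ≤ Order.succ κ := hκ.trans (Order.le_succ κ)
  have : Infinite I := infinite_iff.mpr (hI ▸ hκ')
  have : Infinite D := infinite_iff.mpr (hD ▸ hκ)
  obtain ⟨_, _, hIio⟩ := exists_linearOrder_noMaxOrder_mk_Iio_lt I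
  obtain ⟨C, hC, hCd, hCI⟩ := exists_isClosed_discreteTopology_mk_eq
    (fun a => hD ▸ Order.lt_succ_iff.mp (hI ▸ hIio a)) (hD ▸ hI ▸ Order.lt_succ κ)
  have hbound : ∀ B : Set (I → D), DiscreteTopology B → #B ≤ Order.succ κ := fun B _ => calc
    #B ≤ #(Finset (I × D)) := mk_le_mk_finset_prod_of_discreteTopology B
    _ = #I * #D := by rw [mk_finset_of_infinite, mk_prod, lift_id, lift_id]
    _ = Order.succ κ := by
      rw [hI, hD, mul_eq_left hκ' (Order.le_succ κ) (aleph0_pos.trans_le hκ).ne']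
  refine ⟨⟨C, hC, hCd, hCI.trans hI⟩, IsGreatest.csSup_eq ⟨⟨C, hC, hCd, hCI.trans hI⟩, ?_⟩⟩
  rintro _ ⟨B, -, hB, rfl⟩
  exact hbound B hB
end

section
/- Suppose there is a compact Hausdorff space which can be partitioned into κ many G_δ sets. Then there is a compact Hausdorff space X admitting a cover by G_δ sets with no subfamily of cardinality at most κ whose union is dense in the G_δ modification X_δ; in particular the weak Lindelöf number of X_δ exceeds κ. -/
open Set Cardinal TopologicalSpace

universe u

/-- Key lemma: if `K` is a compact space partitioned into (any number of) nonempty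
`Gδ` pieces `P`, and `S` embeds into `Set ↥P`, then there is no nonprincipal
σ-complete ultrafilter on `S`. -/
lemma no_sigma_complete_ultrafilter
    {K : Type u} [tK : TopologicalSpace K] [CompactSpace K]
    (P : Set (Set K)) (hGδ : ∀ p ∈ P, IsGδ p) (hne : ∀ p ∈ P, p ≠ ∅)
    (hdisj : P.PairwiseDisjoint id) (hcov : ⋃₀ P = Set.univ)
    (hPne : Nonempty ↥P)
    {S : Type u} (ι : S ↪ Set ↥P)
    (U : Ultrafilter S)
    (hprin : ∀ s : S, {s} ∉ U)
    (hσ : ∀ B : ℕ → Set S, (∀ n, B n ∈ U) → (⋂ n, B n) ∈ U) : False := by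
  classical
  by_cases hg : ∃ g : S → ↥P, ∀ p : ↥P, g ⁻¹' {p} ∉ U
  · -- pigeonhole through the partition using compactness
    obtain ⟨g, hgfib⟩ := hg
    have hx : ∀ p : ↥P, ∃ x : K, x ∈ (p : Set K) := fun p =>
      Set.nonempty_iff_ne_empty.mpr (hne p p.2)
    choose x hxmem using hx
    set c : S → K := fun s => x (g s) with hc
    obtain ⟨x0, -, hx0⟩ := isCompact_univ.ultrafilter_le_nhds ((U.map c))
      (by simp)
    obtain ⟨p0, hp0P, hx0p0⟩ : ∃ p0 ∈ P, x0 ∈ p0 := by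
      have : x0 ∈ ⋃₀ P := hcov ▸ Set.mem_univ x0
      simpa using this
    -- `c ⁻¹' p0 ∈ U` by σ-completeness
    have hpre : c ⁻¹' p0 ∈ U := by
      obtain ⟨T0, hT0open, hT0ct, hT0eq⟩ := hGδ p0 hp0P
      have hmem : ∀ t ∈ T0, c ⁻¹' t ∈ U := by
        intro t ht
        have hopen : IsOpen t := hT0open t ht
        have hx0t : x0 ∈ t := by
          have := hT0eq ▸ hx0p0
          exact Set.mem_sInter.mp this t ht
        have : t ∈ Filter.map c (U : Filter S) := hx0 (hopen.mem_nhds hx0t)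
        simpa using this
      rcases T0.eq_empty_or_nonempty with hT0e | hT0ne
      · have : p0 = Set.univ := by rw [hT0eq, hT0e, Set.sInter_empty]
        rw [this]
        simp only [Set.preimage_univ]
        exact Filter.univ_mem
      · obtain ⟨f, hf⟩ := hT0ct.exists_eq_range hT0ne
        have : (⋂ n, c ⁻¹' f n) ∈ U := by
          apply hσ
          intro n
          exact hmem (f n) (by rw [hf]; exact Set.mem_range_self n)
        have heq : (⋂ n, c ⁻¹' f n) = c ⁻¹' p0 := by
          rw [hT0eq, hf, Set.sInter_range, Set.preimage_iInter]
        rwa [heq] at this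
    -- but `c ⁻¹' p0 ⊆ g ⁻¹' {⟨p0, hp0P⟩}`
    have hsub : c ⁻¹' p0 ⊆ g ⁻¹' {(⟨p0, hp0P⟩ : ↥P)} := by
      intro s hs
      have h1 : x (g s) ∈ (g s : Set K) := hxmem (g s)
      have h2 : x (g s) ∈ p0 := hs
      have : (g s : Set K) = p0 := by
        by_contra hne'
        have hd : Disjoint (id (g s : Set K)) (id p0) :=
          hdisj (g s).2 hp0P (by simpa [Subtype.ext_iff] using hne')
        exact (Set.disjoint_left.mp hd h1) h2
      simp only [Set.mem_preimage, Set.mem_singleton_iff]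
      exact Subtype.ext this
    exact hgfib ⟨p0, hp0P⟩ (Filter.mem_of_superset hpre hsub)
  · push_neg at hg
    -- completeness for `↥P`-indexed families
    have hcomp : ∀ A : ↥P → Set S, (∀ p, A p ∈ U) → (⋂ p, A p) ∈ U := by
      intro A hA
      obtain ⟨p₀⟩ := hPne
      obtain ⟨pb, hpb⟩ := hg (fun s => if h : ∃ p, s ∉ A p then h.choose else p₀)
      have hsub : (fun s => if h : ∃ p, s ∉ A p then h.choose else p₀) ⁻¹' {pb} ⊆
          (A pb)ᶜ ∪ ⋂ p, A p := by
        intro s hs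
        have hs' : (if h : ∃ p, s ∉ A p then h.choose else p₀) = pb := hs
        by_cases h : ∃ p, s ∉ A p
        · left
          rw [dif_pos h] at hs'
          have h1 : s ∉ A h.choose := h.choose_spec
          rwa [hs'] at h1
        · right
          push_neg at h
          exact Set.mem_iInter.mpr h
      have hunion : (A pb)ᶜ ∪ (⋂ p, A p) ∈ U := Filter.mem_of_superset hpb hsub
      rcases Ultrafilter.union_mem_iff.mp hunion with h | h
      · exact absurd h (Ultrafilter.compl_notMem_iff.mpr (hA pb))
      · exact h
    -- use the embedding to get a subsingleton in `U`
    set A : ↥P → Set S := fun p =>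
      if {s : S | p ∈ ι s} ∈ U then {s : S | p ∈ ι s} else {s : S | p ∈ ι s}ᶜ with hAdef
    have hA : ∀ p, A p ∈ U := by
      intro p
      by_cases h : {s : S | p ∈ ι s} ∈ U
      · simp [hAdef, h]
      · simp only [hAdef, h, if_false]
        exact Ultrafilter.compl_mem_iff_notMem.mpr h
    have hT : (⋂ p, A p) ∈ U := hcomp A hA
    have hss : (⋂ p, A p).Subsingleton := by
      intro s hs t ht
      apply ι.injective
      ext p
      have hs' := Set.mem_iInter.mp hs p
      have ht' := Set.mem_iInter.mp ht p
      by_cases h : {s : S | p ∈ ι s} ∈ U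
      · simp only [hAdef, h, if_true, Set.mem_setOf_eq] at hs' ht'
        exact ⟨fun _ => ht', fun _ => hs'⟩
      · simp only [hAdef, h, if_false, Set.mem_compl_iff, Set.mem_setOf_eq] at hs' ht'
        exact ⟨fun hh => absurd hh hs', fun hh => absurd hh ht'⟩
    obtain ⟨s₀, hs₀⟩ := Ultrafilter.nonempty_of_mem hT
    refine hprin s₀ (Filter.mem_of_superset hT ?_)
    intro t htT
    exact hss htT hs₀

/-- Suppose there is a compact Hausdorff space which can be partitioned into `κ` many G_δ
sets. Then there is a compact Hausdorff space `X` admitting a cover by G_δ sets with no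
subfamily of cardinality at most `κ` whose union is dense in the G_δ modification `X_δ`;
in particular `wL(X_δ) > κ`. -/
theorem compact_gdelta_cover_no_small_dense_subfamily
    (κ : Cardinal.{u}) (hκ : ℵ₀ ≤ κ)
    (hpart : ∃ (K : Type u) (tK : TopologicalSpace K), @CompactSpace K tK ∧ @T2Space K tK ∧
      ∃ P : Set (Set K), (∀ p ∈ P, @IsGδ K tK p) ∧ (∀ p ∈ P, p ≠ ∅) ∧
        P.PairwiseDisjoint id ∧ ⋃₀ P = Set.univ ∧ #P = κ) :
    ∃ (X : Type u) (tX : TopologicalSpace X), @CompactSpace X tX ∧ @T2Space X tX ∧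
      ∃ 𝒰 : Set (Set X), (∀ u ∈ 𝒰, @IsGδ X tX u) ∧ ⋃₀ 𝒰 = Set.univ ∧
        ∀ 𝒱 ⊆ 𝒰, #𝒱 ≤ κ →
          ¬ @Dense X (TopologicalSpace.generateFrom {s : Set X | @IsGδ X tX s}) (⋃₀ 𝒱) := by
  classical
  obtain ⟨K, tK, hKcomp, hKt2, P, hGδ, hne, hdisj, hcov, hcard⟩ := hpart
  -- the index set of size κ⁺
  set S : Type u := (Order.succ κ).out with hSdef
  have hScard : #S = Order.succ κ := Cardinal.mk_out _
  -- nonempty pieces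
  have hPne : Nonempty ↥P := by
    rw [← Cardinal.mk_ne_zero_iff, hcard]
    exact ne_of_gt (lt_of_lt_of_le aleph0_pos hκ)
  -- the embedding S ↪ Set ↥P
  have hemb : Nonempty (S ↪ Set ↥P) := by
    rw [← Cardinal.le_def, hScard, Cardinal.mk_set, hcard]
    exact Order.succ_le_of_lt (Cardinal.cantor κ)
  obtain ⟨ι⟩ := hemb
  -- the space
  refine ⟨Ultrafilter S, inferInstance, inferInstance, inferInstance, ?_⟩
  -- the cover
  set 𝒰₁ : Set (Set (Ultrafilter S)) :=
    Set.range (fun s : S => ({pure s} : Set (Ultrafilter S))) with h𝒰₁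
  set 𝒰₂ : Set (Set (Ultrafilter S)) :=
    {G | ∃ B : ℕ → Set S, (⋂ n, B n) = ∅ ∧ G = ⋂ n, {u : Ultrafilter S | B n ∈ u}} with h𝒰₂
  refine ⟨𝒰₁ ∪ 𝒰₂, ?_, ?_, ?_⟩
  · -- all members are Gδ
    rintro u (⟨s, rfl⟩ | ⟨B, hB, rfl⟩)
    · -- {pure s} is open: it equals the basic open set {u | {s} ∈ u}
      show IsGδ ({pure s} : Set (Ultrafilter S))
      have : ({pure s} : Set (Ultrafilter S)) = {u : Ultrafilter S | {s} ∈ u} := by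
        ext u
        simp only [Set.mem_singleton_iff, Set.mem_setOf_eq]
        constructor
        · rintro rfl; exact rfl
        · intro hu
          obtain ⟨y, hy, huy⟩ := Ultrafilter.eq_pure_of_finite_mem (Set.finite_singleton s) hu
          rw [Set.mem_singleton_iff] at hy
          rw [huy, hy]
      rw [this]
      exact (ultrafilter_isOpen_basic {s}).isGδ
    · exact IsGδ.iInter_of_isOpen fun n => ultrafilter_isOpen_basic (B n)
  · -- it covers
    apply Set.eq_univ_of_forall
    intro u
    by_cases hp : ∃ s : S, {s} ∈ u
    · obtain ⟨s, hs⟩ := hp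
      obtain ⟨y, hy, huy⟩ := Ultrafilter.eq_pure_of_finite_mem (Set.finite_singleton s) hs
      refine ⟨{pure y}, Or.inl ⟨y, rfl⟩, by simp [huy]⟩
    · push_neg at hp
      by_cases hB : ∃ B : ℕ → Set S, (∀ n, B n ∈ u) ∧ (⋂ n, B n) = ∅
      · obtain ⟨B, hBmem, hBempty⟩ := hB
        exact ⟨⋂ n, {v : Ultrafilter S | B n ∈ v}, Or.inr ⟨B, hBempty, rfl⟩,
          Set.mem_iInter.mpr fun n => hBmem n⟩
      · -- otherwise u is σ-complete: contradiction via the key lemma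
        exfalso
        push_neg at hB
        have hσ : ∀ B : ℕ → Set S, (∀ n, B n ∈ u) → (⋂ n, B n) ∈ u := by
          intro B hBmem
          by_contra h
          have hcompl : (⋂ n, B n)ᶜ ∈ u := Ultrafilter.compl_mem_iff_notMem.mpr h
          have hBne := hB (fun n => B n ∩ (⋂ n, B n)ᶜ)
            (fun n => Filter.inter_mem (hBmem n) hcompl)
          have hempty : (⋂ n, B n ∩ (⋂ n, B n)ᶜ) = ∅ := by
            rw [← Set.iInter_inter]
            exact Set.inter_compl_self _
          rw [hempty] at hBne
          exact Set.not_nonempty_empty hBne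
        exact no_sigma_complete_ultrafilter P hGδ hne hdisj hcov hPne ι u hp hσ
  · -- no small subfamily is dense in the Gδ modification
    intro 𝒱 h𝒱sub h𝒱card hdense
    -- the set of s whose principal singleton is used
    set E : Set S := {s : S | ({pure s} : Set (Ultrafilter S)) ∈ 𝒱} with hEdef
    have hEcard : #E ≤ κ := by
      refine le_trans (Cardinal.mk_le_of_injective (f := fun e : E =>
        (⟨{pure e.1}, e.2⟩ : 𝒱)) ?_) h𝒱card
      intro a b hab
      have : ({pure a.1} : Set (Ultrafilter S)) = {pure b.1} := congrArg Subtype.val hab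
      have := Set.singleton_eq_singleton_iff.mp this
      exact Subtype.ext (Ultrafilter.pure_injective this)
    have hEne : E ≠ Set.univ := by
      intro h
      have : #E = #S := by rw [h, Cardinal.mk_univ]
      rw [this, hScard] at hEcard
      exact absurd (lt_of_le_of_lt hEcard (Order.lt_succ κ)) (lt_irrefl _)
    obtain ⟨s₀, hs₀⟩ := (Set.ne_univ_iff_exists_notMem E).mp hEne
    -- the witness: {pure s₀} is open in the Gδ modification and misses ⋃₀ 𝒱
    have hwitGδ : IsGδ ({pure s₀} : Set (Ultrafilter S)) := by
      have : ({pure s₀} : Set (Ultrafilter S)) = {u : Ultrafilter S | {s₀} ∈ u} := by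
        ext u
        simp only [Set.mem_singleton_iff, Set.mem_setOf_eq]
        constructor
        · rintro rfl; exact rfl
        · intro hu
          obtain ⟨y, hy, huy⟩ := Ultrafilter.eq_pure_of_finite_mem (Set.finite_singleton s₀) hu
          rw [Set.mem_singleton_iff] at hy
          rw [huy, hy]
      rw [this]
      exact (ultrafilter_isOpen_basic {s₀}).isGδ
    have hdisj₀ : ({pure s₀} : Set (Ultrafilter S)) ∩ ⋃₀ 𝒱 = ∅ := by
      apply Set.eq_empty_of_forall_notMem
      rintro u ⟨hu1, W, hW𝒱, hu2⟩
      rw [Set.mem_singleton_iff] at hu1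
      subst hu1
      rcases h𝒱sub hW𝒱 with hW1 | hW2
      · obtain ⟨s, rfl⟩ := hW1
        rw [Set.mem_singleton_iff] at hu2
        have : s = s₀ := Ultrafilter.pure_injective hu2.symm
        subst this
        exact hs₀ hW𝒱
      · obtain ⟨B, hBempty, rfl⟩ := hW2
        have : ∀ n, s₀ ∈ B n := by
          intro n
          have := Set.mem_iInter.mp hu2 n
          simpa using this
        have : s₀ ∈ ⋂ n, B n := Set.mem_iInter.mpr this
        rw [hBempty] at this
        exact this
    -- contradiction with density
    have hopen : @IsOpen (Ultrafilter S)
        (TopologicalSpace.generateFrom {s : Set (Ultrafilter S) | IsGδ s})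
        ({pure s₀} : Set (Ultrafilter S)) :=
      TopologicalSpace.isOpen_generateFrom_of_mem hwitGδ
    have hne' : ({pure s₀} : Set (Ultrafilter S)).Nonempty := ⟨pure s₀, rfl⟩
    have key : ∀ (T' : TopologicalSpace (Ultrafilter S)), @Dense _ T' (⋃₀ 𝒱) →
        @IsOpen _ T' ({pure s₀} : Set (Ultrafilter S)) → False := by
      intro T' hd ho
      letI := T'
      have hnon := hd.inter_open_nonempty ({pure s₀} : Set (Ultrafilter S)) ho hne'
      rw [hdisj₀] at hnon
      exact Set.not_nonempty_empty hnon
    exact key _ hdense hopen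
end

section
/- For every normal topological space X, wL_c(X) = wL(X): the least cardinal κ such that every open cover of any closed set F has a subfamily of size ≤ κ whose union has closure containing F equals the least cardinal κ such that every open cover of X has a subfamily of size ≤ κ with dense union. -/
open Set Cardinal TopologicalSpace

universe u

/-- The weak Lindelöf number of `X`: the least infinite cardinal `κ` such that every open
cover of `X` has a subfamily of cardinality at most `κ` with dense union. -/
noncomputable def weakLindelofNumber (X : Type u) [TopologicalSpace X] : Cardinal.{u} :=
  sInf {κ : Cardinal.{u} | ℵ₀ ≤ κ ∧
    ∀ 𝒰 : Set (Set X), (∀ u ∈ 𝒰, IsOpen u) → ⋃₀ 𝒰 = Set.univ →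
      ∃ 𝒱 ⊆ 𝒰, #𝒱 ≤ κ ∧ Dense (⋃₀ 𝒱)}

/-- `wL_c(X)`: the least infinite cardinal `κ` such that for every closed `F ⊆ X` and every
family of open sets covering `F` there is a subfamily of size at most `κ` whose union has
closure containing `F`. -/
noncomputable def weakLindelofNumberClosed (X : Type u) [TopologicalSpace X] : Cardinal.{u} :=
  sInf {κ : Cardinal.{u} | ℵ₀ ≤ κ ∧
    ∀ F : Set X, IsClosed F → ∀ 𝒰 : Set (Set X), (∀ u ∈ 𝒰, IsOpen u) → F ⊆ ⋃₀ 𝒰 →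
      ∃ 𝒱 ⊆ 𝒰, #𝒱 ≤ κ ∧ F ⊆ closure (⋃₀ 𝒱)}

/-- For every normal topological space `X`, `wL_c(X) = wL(X)`. -/
theorem weakLindelofNumberClosed_eq_weakLindelofNumber
    (X : Type u) [TopologicalSpace X] [NormalSpace X] :
    weakLindelofNumberClosed X = weakLindelofNumber X := by
  unfold weakLindelofNumberClosed weakLindelofNumber
  congr 1
  ext κ
  constructor
  · rintro ⟨hκ, h⟩
    refine ⟨hκ, fun 𝒰 hop hcov => ?_⟩
    obtain ⟨𝒱, h𝒱, hcard, hcl⟩ := h univ isClosed_univ 𝒰 hop (by rw [hcov])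
    exact ⟨𝒱, h𝒱, hcard, dense_iff_closure_eq.mpr (eq_univ_of_univ_subset hcl)⟩
  · rintro ⟨hκ, h⟩
    refine ⟨hκ, fun F hF 𝒰 hop hcov => ?_⟩
    have hGopen : IsOpen (⋃₀ 𝒰) := isOpen_sUnion hop
    have hdisj : Disjoint F (⋃₀ 𝒰)ᶜ := disjoint_compl_right_iff_subset.mpr hcov
    obtain ⟨V, W, hVo, hWo, hFV, hGW, hVW⟩ :=
      normal_separation hF hGopen.isClosed_compl hdisj
    have hclV : closure V ⊆ ⋃₀ 𝒰 := by
      have h1 : closure V ⊆ Wᶜ :=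
        closure_minimal (subset_compl_iff_disjoint_right.mpr hVW) hWo.isClosed_compl
      have h2 : Wᶜ ⊆ ⋃₀ 𝒰 := by
        rw [compl_subset_comm]; exact hGW
      exact h1.trans h2
    set c : Set X := (closure V)ᶜ with hc
    have hcov' : ⋃₀ (insert c 𝒰) = Set.univ := by
      apply eq_univ_of_forall
      intro x
      by_cases hx : x ∈ closure V
      · obtain ⟨u, hu, hxu⟩ := hclV hx
        exact ⟨u, Set.mem_insert_of_mem _ hu, hxu⟩
      · exact ⟨c, Set.mem_insert _ _, hx⟩
    have hop' : ∀ u ∈ insert c 𝒰, IsOpen u := by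
      rintro u (rfl | hu)
      · exact isClosed_closure.isOpen_compl
      · exact hop u hu
    obtain ⟨𝒱, h𝒱sub, hcard, hdense⟩ := h (insert c 𝒰) hop' hcov'
    refine ⟨𝒱 ∩ 𝒰, Set.inter_subset_right,
      le_trans (mk_le_mk_of_subset Set.inter_subset_left) hcard, ?_⟩
    intro x hx
    rw [mem_closure_iff]
    intro O hO hxO
    have hne : (O ∩ V).Nonempty := ⟨x, hxO, hFV hx⟩
    obtain ⟨p, hp, q, hq𝒱, hpq⟩ :=
      hdense.inter_open_nonempty (O ∩ V) (hO.inter hVo) hne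
    have hq𝒰 : q ∈ 𝒰 := by
      rcases h𝒱sub hq𝒱 with rfl | hq
      · exact absurd (subset_closure hp.2) hpq
      · exact hq
    exact ⟨p, hp.1, q, ⟨hq𝒱, hq𝒰⟩, hpq⟩
end

section
/- Let X be a Lindelöf space with a point-countable base. Then every cover of X by G_δ sets has a subcover of cardinality at most 2^{ℵ₀}; that is, L(X_δ) ≤ 𝔠. -/
open Set Cardinal TopologicalSpace Ordinal

universe u

namespace LGdAux

variable {X : Type u}

/-- `A` is good (w.r.t. the base `B`) if there is a countable cover of `X` by members of `B`
none of which contains `A`. -/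
def Good (B : Set (Set X)) (A : Set X) : Prop :=
  ∃ f : ℕ → Set X, (∀ n, f n ∈ B ∧ ¬ A ⊆ f n) ∧ ∀ x : X, ∃ n, x ∈ f n

open Classical in
/-- A chosen countable cover witnessing goodness, or the constant `univ` cover. -/
noncomputable def cfun (B : Set (Set X)) (A : Set X) : ℕ → Set X :=
  if h : Good B A then h.choose else fun _ => Set.univ

theorem cfun_covers (B : Set (Set X)) (A : Set X) (x : X) : ∃ n, x ∈ cfun B A n := by
  classical
  unfold cfun
  split
  · next h => exact h.choose_spec.2 x
  · exact ⟨0, mem_univ x⟩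

theorem cfun_spec {B : Set (Set X)} {A : Set X} (h : Good B A) (n : ℕ) :
    cfun B A n ∈ B ∧ ¬ A ⊆ cfun B A n := by
  classical
  unfold cfun
  rw [dif_pos h]
  exact h.choose_spec.1 n

/-- The index type: a well order of type `ω₁`. -/
abbrev Idx : Type u := (Cardinal.aleph 1 : Cardinal.{u}).ord.ToType

/-- The transfinite closing-off iteration: `D B p j` is the intersection of the chosen
cover members at all earlier stages, where `p` selects which member to take. -/
noncomputable def D (B : Set (Set X)) (p : Idx.{u} → Set X → ℕ) : Idx.{u} → Set X :=
  (IsWellFounded.wf (α := Idx.{u}) (r := (· < ·))).fix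
    (fun j rec => ⋂ i : {i : Idx.{u} // i < j}, cfun B (rec i i.2) (p i (rec i i.2)))

theorem D_eq (B : Set (Set X)) (p : Idx.{u} → Set X → ℕ) (j : Idx.{u}) :
    D B p j = ⋂ i : {i : Idx.{u} // i < j}, cfun B (D B p i) (p i (D B p i)) :=
  WellFounded.fix_eq _ _ _

theorem D_coh (B : Set (Set X)) (p q : Idx.{u} → Set X → ℕ)
    (j : Idx.{u}) (h : ∀ i, i < j → q i (D B p i) = p i (D B p i)) :
    D B q j = D B p j := by
  induction j using WellFoundedLT.induction with
  | ind j IH =>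
    rw [D_eq B q j, D_eq B p j]
    apply iInter_congr
    rintro ⟨i, hi⟩
    have h1 : D B q i = D B p i := IH i hi (fun i' hi' => h i' (hi'.trans hi))
    rw [h1, h i hi]


theorem exists_special_of_not_good [TopologicalSpace X] [LindelofSpace X] [Nonempty X]
    {B : Set (Set X)} (hB : IsTopologicalBasis B) {A : Set X} (h : ¬ Good B A) :
    ∃ x₀ : X, ∀ b ∈ B, x₀ ∈ b → A ⊆ b := by
  by_contra hno
  push_neg at hno
  apply h
  obtain ⟨r, hrc, hrcov⟩ := isLindelof_univ.elim_countable_subcover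
    (ι := {b : Set X // b ∈ B ∧ ¬ A ⊆ b}) (fun i => i.1)
    (fun i => hB.isOpen i.2.1)
    (by
      intro x _
      obtain ⟨b, hbB, hxb, hnsub⟩ := hno x
      exact mem_iUnion.2 ⟨⟨b, hbB, hnsub⟩, hxb⟩)
  have hrne : r.Nonempty := by
    obtain ⟨x⟩ := ‹Nonempty X›
    have := hrcov (mem_univ x)
    simp only [mem_iUnion] at this
    obtain ⟨i, hi, _⟩ := this
    exact ⟨i, hi⟩
  obtain ⟨f, hf⟩ := Set.Countable.exists_eq_range hrc hrne
  refine ⟨fun n => (f n).1, fun n => (f n).2, fun x => ?_⟩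
  have := hrcov (mem_univ x)
  simp only [mem_iUnion] at this
  obtain ⟨i, hir, hxi⟩ := this
  rw [hf] at hir
  obtain ⟨n, rfl⟩ := hir
  exact ⟨n, hxi⟩

variable (x : X)

open Classical in
/-- Index of a chosen cover member containing `x`. -/
noncomputable def nx (B : Set (Set X)) (x : X) (A : Set X) : ℕ :=
  (cfun_covers B A x).choose

theorem mem_cfun_nx (B : Set (Set X)) (x : X) (A : Set X) :
    x ∈ cfun B A (nx B x A) := (cfun_covers B A x).choose_spec

/-- The branch selector following the point `x`. -/
noncomputable def px (B : Set (Set X)) (x : X) : Idx.{u} → Set X → ℕ :=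
  fun _ A => nx B x A

theorem mem_D_px (B : Set (Set X)) (x : X) (j : Idx.{u}) : x ∈ D B (px B x) j := by
  rw [D_eq]
  exact mem_iInter.2 fun i => mem_cfun_nx B x _

/-- Termination: along the branch of `x`, some stage is not good. -/
theorem exists_not_good (B : Set (Set X)) (hpc : ∀ x : X, {b ∈ B | x ∈ b}.Countable)
    (x : X) : ∃ j : Idx.{u}, ¬ Good B (D B (px B x) j) := by
  by_contra hall
  push_neg at hall
  set p := px B x with hp
  -- each stage gives a new basic set containing x
  have hmem : ∀ j : Idx.{u}, cfun B (D B p j) (p j (D B p j)) ∈ {b ∈ B | x ∈ b} := by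
    intro j
    exact ⟨(cfun_spec (hall j) _).1, mem_cfun_nx B x _⟩
  set φ : Idx.{u} → {b : Set X // b ∈ B ∧ x ∈ b} :=
    fun j => ⟨cfun B (D B p j) (p j (D B p j)), hmem j⟩ with hφ
  have hsub : ∀ i j : Idx.{u}, i < j → D B p j ⊆ (φ i).1 := by
    intro i j hij
    rw [D_eq]
    exact iInter_subset_of_subset ⟨i, hij⟩ le_rfl
  have hinj : Function.Injective φ := by
    intro i j hij
    by_contra hne
    have hv : cfun B (D B p i) (p i (D B p i)) = cfun B (D B p j) (p j (D B p j)) :=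
      congrArg Subtype.val hij
    rcases lt_or_gt_of_ne hne with h | h
    · have h2 := hsub i j h
      rw [show ((φ i).1 = cfun B (D B p i) (p i (D B p i))) from rfl, hv] at h2
      exact (cfun_spec (hall j) (p j (D B p j))).2 h2
    · have h2 := hsub j i h
      rw [show ((φ j).1 = cfun B (D B p j) (p j (D B p j))) from rfl, ← hv] at h2
      exact (cfun_spec (hall i) (p i (D B p i))).2 h2
  have h1 : #(Idx.{u}) ≤ ℵ₀ := by
    calc #(Idx.{u}) ≤ #{b : Set X // b ∈ B ∧ x ∈ b} := Cardinal.mk_le_of_injective hinj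
    _ ≤ ℵ₀ := by
        rw [Cardinal.mk_le_aleph0_iff]
        have : ({b ∈ B | x ∈ b} : Set (Set X)).Countable := hpc x
        exact this.to_subtype
  rw [Cardinal.mk_toType, Cardinal.card_ord] at h1
  exact absurd (lt_of_lt_of_le Cardinal.aleph0_lt_aleph_one h1) (lt_irrefl _)


/-- The collection of all reachable stage-sets has size at most continuum. -/
theorem card_stages_le (B : Set (Set X)) :
    #({A : Set X | ∃ g : Idx.{u} → ℕ, ∃ j : Idx.{u}, A = D B (fun i _ => g i) j}) ≤
      Cardinal.continuum := by
  classical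
  set m : Idx.{u} → Set (Set X) := fun j =>
    Set.range (fun f : (↥(Set.Iio j) → ℕ) =>
      D B (fun i _ => if h : i < j then f ⟨i, h⟩ else 0) j) with hm
  have hsub : {A : Set X | ∃ g : Idx.{u} → ℕ, ∃ j : Idx.{u}, A = D B (fun i _ => g i) j}
      ⊆ ⋃ j, m j := by
    rintro A ⟨g, j, rfl⟩
    refine mem_iUnion.2 ⟨j, ⟨fun i => g i.1, ?_⟩⟩
    apply D_coh
    intro i hi
    simp [hi]
  refine le_trans (Cardinal.mk_le_mk_of_subset hsub) ?_
  refine le_trans (Cardinal.mk_iUnion_le m) ?_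
  have hIdx : #(Idx.{u}) = Cardinal.aleph 1 := by
    rw [Cardinal.mk_toType, Cardinal.card_ord]
  have hsup : ⨆ j, #(m j) ≤ Cardinal.continuum := by
    refine ciSup_le' fun j => ?_
    refine le_trans (Cardinal.mk_range_le) ?_
    have hIio : #(↥(Set.Iio j)) ≤ ℵ₀ := by
      have h1 := Cardinal.mk_Iio_ord_toType j
      have h2 : (Set.Iio j).Countable := (Cardinal.countable_iff_lt_aleph_one _).2 h1
      exact Cardinal.mk_le_aleph0_iff.2 h2.to_subtype
    calc #(↥(Set.Iio j) → ℕ)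
        = Cardinal.lift.{u} #ℕ ^ Cardinal.lift.{0} #(↥(Set.Iio j)) := Cardinal.mk_arrow _ _
      _ = ℵ₀ ^ #(↥(Set.Iio j)) := by simp
      _ ≤ ℵ₀ ^ (ℵ₀ : Cardinal.{u}) :=
          Cardinal.power_le_power_left Cardinal.aleph0_ne_zero hIio
      _ = Cardinal.continuum := Cardinal.aleph0_power_aleph0
  calc #(Idx.{u}) * ⨆ j, #(m j) ≤ Cardinal.continuum * Cardinal.continuum := by
        refine mul_le_mul' ?_ hsup
        rw [hIdx]; exact Cardinal.aleph_one_le_continuum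
    _ = Cardinal.continuum := Cardinal.mul_eq_self Cardinal.aleph0_le_continuum

end LGdAux

/-- Let `X` be a Lindelöf space with a point-countable base. Then every cover of `X` by
G_δ sets has a subcover of cardinality at most `2^ℵ₀ = 𝔠`, i.e. `L(X_δ) ≤ 𝔠`. -/
theorem lindelof_gdelta_of_point_countable_base
    (X : Type u) [TopologicalSpace X] [LindelofSpace X]
    (B : Set (Set X)) (hB : IsTopologicalBasis B)
    (hpc : ∀ x : X, {b ∈ B | x ∈ b}.Countable)
    (𝒰 : Set (Set X)) (h𝒰 : ∀ u ∈ 𝒰, IsGδ u) (hcov : ⋃₀ 𝒰 = Set.univ) :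
    ∃ 𝒱 ⊆ 𝒰, #𝒱 ≤ continuum ∧ ⋃₀ 𝒱 = Set.univ := by
  classical
  rcases isEmpty_or_nonempty X with hX | hX
  · refine ⟨∅, empty_subset _, by simp, ?_⟩
    rw [sUnion_empty]
    exact (Set.univ_eq_empty_iff.mpr hX).symm
  · have hu0 : ∃ u, u ∈ 𝒰 := by
      have : hX.some ∈ ⋃₀ 𝒰 := hcov ▸ mem_univ _
      obtain ⟨u, hu, -⟩ := this
      exact ⟨u, hu⟩
    set uof : Set X → Set X := fun A =>
      if h : ∃ u, u ∈ 𝒰 ∧ A ⊆ u then h.choose else hu0.choose with huof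
    set S : Set (Set X) :=
      {A | ∃ g : LGdAux.Idx.{u} → ℕ, ∃ j, A = LGdAux.D B (fun i _ => g i) j} with hS
    refine ⟨uof '' S, ?_, ?_, ?_⟩
    · rintro _ ⟨A, -, rfl⟩
      by_cases h : ∃ u, u ∈ 𝒰 ∧ A ⊆ u
      · simp only [huof, dif_pos h]
        exact h.choose_spec.1
      · simp only [huof, dif_neg h]
        exact hu0.choose_spec
    · exact le_trans Cardinal.mk_image_le (LGdAux.card_stages_le B)
    · apply eq_univ_of_forall
      intro x
      obtain ⟨j, hj⟩ := LGdAux.exists_not_good B hpc x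
      set A := LGdAux.D B (LGdAux.px B x) j with hA
      obtain ⟨y0, hy0⟩ := LGdAux.exists_special_of_not_good hB hj
      have : y0 ∈ ⋃₀ 𝒰 := hcov ▸ mem_univ _
      obtain ⟨u, huU, hyu⟩ := this
      have hAu : A ⊆ u := by
        obtain ⟨T, hTopen, -, rfl⟩ := h𝒰 u huU
        intro y hy
        rw [mem_sInter] at hyu ⊢
        intro t ht
        obtain ⟨b, hbB, hyb, hbt⟩ := hB.exists_subset_of_mem_open (hyu t ht) (hTopen t ht)
        exact hbt (hy0 b hbB hyb hy)
      have hex : ∃ u', u' ∈ 𝒰 ∧ A ⊆ u' := ⟨u, huU, hAu⟩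
      have hxA : x ∈ A := LGdAux.mem_D_px B x j
      have hAS : A ∈ S := by
        refine ⟨fun i => LGdAux.px B x i (LGdAux.D B (LGdAux.px B x) i), j, ?_⟩
        rw [hA]
        exact (LGdAux.D_coh B (LGdAux.px B x)
          (fun i _ => LGdAux.px B x i (LGdAux.D B (LGdAux.px B x) i)) j (fun i hi => rfl)).symm
      refine mem_sUnion.2 ⟨uof A, ⟨A, hAS, rfl⟩, ?_⟩
      simp only [huof, dif_pos hex]
      exact hex.choose_spec.2 hxA
end

section
/- For κ > ω₁, let Y = {x ∈ 2^κ : |x⁻¹(1)| ≤ ℵ₀} and X = Y ∪ {𝟏} with the subspace topology from 2^κ, where 𝟏 is the constant-one function. Then X is countably compact and has tightness t(X) = κ; moreover every free sequence in X has length at most ω₁, i.e., F(X) ≤ ω₁. -/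
open Set Cardinal TopologicalSpace

universe u

/-- `Y` is countably compact: every countable open cover has a finite subcover. -/
def CountablyCompact (Y : Type u) [TopologicalSpace Y] : Prop :=
  ∀ 𝒰 : Set (Set Y), 𝒰.Countable → (∀ u ∈ 𝒰, IsOpen u) → ⋃₀ 𝒰 = Set.univ →
    ∃ 𝒱 ⊆ 𝒰, 𝒱.Finite ∧ ⋃₀ 𝒱 = Set.univ

/-- The tightness of `Y` is at most `κ`. -/
def TightnessLE (Y : Type u) [TopologicalSpace Y] (κ : Cardinal.{u}) : Prop :=
  ∀ (A : Set Y) (x : Y), x ∈ closure A → ∃ B ⊆ A, #B ≤ κ ∧ x ∈ closure B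

/-- A free sequence in `Y` indexed by a well-ordered type `ι`. -/
def IsFreeSequence (Y : Type u) [TopologicalSpace Y] (ι : Type u) [LinearOrder ι]
    (x : ι → Y) : Prop :=
  ∀ j : ι, Disjoint (closure (x '' {i | i < j})) (closure (x '' {i | j ≤ i}))

/-- `F(Y) ≤ κ`: every free sequence in `Y` has length at most `κ`. -/
def FreeSequencesLE (Y : Type u) [TopologicalSpace Y] (κ : Cardinal.{u}) : Prop :=
  ∀ (ι : Type u) [LinearOrder ι], WellFoundedLT ι →
    ∀ x : ι → Y, IsFreeSequence Y ι x → #ι ≤ κ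

/-!
Countable compactness: a countable subset of `X` lies in `{y | supp y ⊆ A} ∪ {𝟏}` for a countable
`A`, which is a compact subset of `X`. Tightness: closure in `2^κ` is witnessed on finite sets of
coordinates, so `t(X) ≤ |[κ]^{<ω}| = κ`; and `𝟏` is in the closure of `Y` but not in that of any
`B ⊆ Y` with `|B| < κ`, because the supports of the points of `B` miss a coordinate.

Free sequences: a free sequence of length `ω₂` gives points `a β ∈ Y`, `β < ω₂`. For `δ` of
countable cofinality, a cluster point `z δ ∈ Y` of the points below `δ` is separated from the
points from `δ` on by a finite set `F δ` of coordinates. Pressing down and counting make the part of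
`F δ` inside the supports below `δ`, and `z δ` on it, constant on a cofinal set. Thin that set to an
uncountable bounded `D` such that, for `δ < δ''` in `D`, every coordinate of `F δ` in the support of
some `a β` lies in the supports below `δ''`. Take `a γ` agreeing with `z δ'` on `F δ'` for some
`δ'` above `D`. For each `δ ∈ D`, `a γ` is `true` at a coordinate of `F δ` outside the supports
below `δ`; these coordinates are pairwise distinct, so the support of `a γ` is uncountable.
-/

universe v

open Order
open scoped Ordinal

/-! ### Products of discrete spaces -/

section DiscreteProduct

variable {ι : Type*} {π : ι → Type*} [∀ i, TopologicalSpace (π i)] [∀ i, DiscreteTopology (π i)]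

theorem mem_closure_pi_iff_forall_finset {S : Set (∀ i, π i)} {z : ∀ i, π i} :
    z ∈ closure S ↔ ∀ F : Finset ι, ∃ s ∈ S, ∀ i ∈ F, s i = z i := by
  rw [mem_closure_iff_nhds]
  refine ⟨fun h F => ?_, fun h t ht => ?_⟩
  · have hF : (F : Set ι).pi (fun i => {z i}) ∈ nhds z :=
      (isOpen_set_pi F.finite_toSet fun i _ => isOpen_discrete _).mem_nhds (by simp)
    obtain ⟨s, hsF, hsS⟩ := h _ hF
    exact ⟨s, hsS, fun i hi => hsF i hi⟩
  · rw [nhds_pi, Filter.mem_pi'] at ht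
    obtain ⟨F, u, hu, hFt⟩ := ht
    obtain ⟨s, hsS, hs⟩ := h F
    refine ⟨s, hFt fun i hi => ?_, hsS⟩
    rw [hs i hi]
    exact mem_of_mem_nhds (hu i)

theorem mem_closure_subtype_pi_iff_forall_finset {X : Set (∀ i, π i)} {S : Set X} {z : X} :
    z ∈ closure S ↔ ∀ F : Finset ι, ∃ s ∈ S, ∀ i ∈ F, (s : ∀ i, π i) i = (z : ∀ i, π i) i := by
  simp [closure_subtype, mem_closure_pi_iff_forall_finset]

end DiscreteProduct

theorem tightnessLE_mk_of_infinite {ι : Type u} [Infinite ι] (X : Set (ι → Bool)) :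
    TightnessLE X #ι := by
  intro A x hx
  choose s hsA hs using mem_closure_subtype_pi_iff_forall_finset.mp hx
  refine ⟨range s, range_subset_iff.mpr hsA, ?_, ?_⟩
  · exact mk_range_le.trans (mk_finset_of_infinite ι).le
  · exact mem_closure_subtype_pi_iff_forall_finset.mpr fun F => ⟨s F, mem_range_self F, hs F⟩

theorem countablyCompact_of_forall_countable_subset_isCompact {Y : Type u} [TopologicalSpace Y]
    (h : ∀ S : Set Y, S.Countable → ∃ K, IsCompact K ∧ S ⊆ K) : CountablyCompact Y := by
  intro 𝒰 h𝒰 hopen hcover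
  rcases 𝒰.eq_empty_or_nonempty with rfl | hne
  · exact ⟨∅, le_rfl, finite_empty, hcover⟩
  obtain ⟨f, rfl⟩ := h𝒰.exists_eq_range hne
  suffices ∃ n, accumulate f n = Set.univ by
    obtain ⟨n, hn⟩ := this
    refine ⟨f '' Iic n, image_subset_range _ _, (finite_Iic n).image f, ?_⟩
    rw [sUnion_image, ← hn, accumulate_def]
    rfl
  by_contra! hmiss
  choose p hp using fun n => (ne_univ_iff_exists_notMem _).mp (hmiss n)
  obtain ⟨K, hK, hpK⟩ := h (range p) (countable_range p)
  obtain ⟨n, hn⟩ := hK.elim_directed_cover (accumulate f)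
    (fun n => isOpen_biUnion fun k _ => hopen _ (mem_range_self k))
    (by rw [iUnion_accumulate, ← sUnion_range, hcover]; exact subset_univ K)
    monotone_accumulate.directed_le
  exact hp n (hn (hpK (mem_range_self n)))

/-! ### The space `X = Y ∪ {𝟏}` -/

def countableSupport (ι : Type u) : Set (ι → Bool) := {x | {i | x i = true}.Countable}

def countableSupportWithOne (ι : Type u) : Set (ι → Bool) := countableSupport ι ∪ {fun _ => true}

section CountableSupport

variable {ι : Type u}

theorem countableSupport_subset_withOne : countableSupport ι ⊆ countableSupportWithOne ι :=
  subset_union_left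

theorem one_mem_countableSupportWithOne : (fun _ => true) ∈ countableSupportWithOne ι :=
  mem_union_right _ rfl

theorem isCompact_setOf_support_subset (A : Set ι) :
    IsCompact {y : ι → Bool | {i | y i = true} ⊆ A} := by
  have : {y : ι → Bool | {i | y i = true} ⊆ A} = (Aᶜ).pi (fun _ => {false}) := by
    ext y
    simp [subset_def, not_imp_comm]
  rw [this]
  exact (isClosed_set_pi fun _ _ => isClosed_discrete _).isCompact

theorem exists_isCompact_superset_of_countable {S : Set (countableSupportWithOne ι)}
    (hS : S.Countable) : ∃ K, IsCompact K ∧ S ⊆ K := by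
  set A := ⋃ s ∈ S ∩ Subtype.val ⁻¹' countableSupport ι, {i | (s : ι → Bool) i = true}
  have hA : A.Countable := (hS.mono inter_subset_left).biUnion fun s hs => hs.2
  set L := {y : ι → Bool | {i | y i = true} ⊆ A} ∪ {fun _ => true}
  have hLX : L ⊆ countableSupportWithOne ι := union_subset_union (fun y hy => hA.mono hy) le_rfl
  refine ⟨Subtype.val ⁻¹' L, Topology.IsInducing.subtypeVal.isCompact_preimage'
    ((isCompact_setOf_support_subset A).union isCompact_singleton) (by simpa using hLX), ?_⟩
  rintro s hs
  rcases s.2 with hsY | hs1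
  · exact Or.inl (subset_biUnion_of_mem
      (u := fun s : countableSupportWithOne ι => {i | s.1 i = true}) ⟨hs, hsY⟩)
  · exact Or.inr hs1

theorem countablyCompact_countableSupportWithOne :
    CountablyCompact (countableSupportWithOne ι) :=
  countablyCompact_of_forall_countable_subset_isCompact fun _ =>
    exists_isCompact_superset_of_countable

theorem one_mem_closure_countableSupport :
    (⟨fun _ => true, one_mem_countableSupportWithOne⟩ : countableSupportWithOne ι) ∈
      closure (Subtype.val ⁻¹' countableSupport ι) := by
  classical
  refine mem_closure_subtype_pi_iff_forall_finset.mpr fun F => ?_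
  have hF : (fun i => decide (i ∈ F)) ∈ countableSupport ι := by
    simpa [countableSupport] using F.countable_toSet
  exact ⟨⟨_, countableSupport_subset_withOne hF⟩, hF, fun i hi => by simpa using hi⟩

theorem not_tightnessLE_countableSupportWithOne {μ : Cardinal.{u}} (hμ : μ < #ι)
    (hι : ℵ₀ < #ι) : ¬ TightnessLE (countableSupportWithOne ι) μ := by
  intro ht
  obtain ⟨B, hBY, hBμ, hB⟩ := ht _ _ one_mem_closure_countableSupport
  set T := ⋃ b ∈ B, {i | (b : ι → Bool) i = true}
  have hT : #T < #ι := calc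
    #T ≤ #B * ⨆ b : B, #{i | (b : ι → Bool) i = true} := mk_biUnion_le _ _
    _ ≤ μ * ℵ₀ :=
      mul_le_mul' hBμ (ciSup_le' fun b => mk_le_aleph0_iff.mpr (hBY b.2).to_subtype)
    _ < #ι := mul_lt_of_lt hι.le hμ hι
  obtain ⟨i₀, hi₀⟩ : ∃ i₀, i₀ ∉ T := by
    by_contra! h
    exact hT.ne (by rw [eq_univ_of_forall h, mk_univ])
  obtain ⟨b, hbB, hb⟩ := mem_closure_subtype_pi_iff_forall_finset.mp hB {i₀}
  exact hi₀ (mem_biUnion hbB (hb i₀ (Finset.mem_singleton_self i₀)))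

end CountableSupport

/-! ### Cofinal subsets of an ordinal -/

def CofinalIn (o : Ordinal.{u}) (S : Set Ordinal.{u}) : Prop := ∀ β < o, ∃ δ ∈ S, β ≤ δ ∧ δ < o

theorem CofinalIn.mono {o : Ordinal.{u}} {S S' : Set Ordinal.{u}} (hS : CofinalIn o S)
    (h : S ⊆ S') : CofinalIn o S' :=
  fun β hβ => (hS β hβ).imp fun _ hδ => ⟨h hδ.1, hδ.2⟩

def IsOmegaLimit (δ : Ordinal.{u}) : Prop := ∃ c : ℕ → Ordinal.{u}, StrictMono c ∧ ⨆ n, c n = δ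

namespace Ordinal

theorem lt_iSup_of_strictMono {c : ℕ → Ordinal.{u}} (hc : StrictMono c) (n : ℕ) :
    c n < ⨆ n, c n :=
  (hc n.lt_succ_self).trans_le (Ordinal.le_iSup c (n + 1))

theorem iSup_nat_lt {o : Ordinal.{u}} (ho : ℵ₀ < o.cof) {c : ℕ → Ordinal.{u}}
    (hc : ∀ n, c n < o) : ⨆ n, c n < o :=
  lift_iSup_lt_of_lt_cof (by simpa [← lift_cof]) hc

theorem exists_lt_forall_lt_of_lift_mk_lt_cof {o : Ordinal.{u}} {β : Type v}
    (hβ : Cardinal.lift.{u} #β < Cardinal.lift.{v} o.cof) {g : β → Ordinal.{u}}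
    (hg : ∀ x, g x < o) : ∃ b < o, ∀ x, g x < b :=
  ⟨⨆ x, g x + 1, lift_iSup_add_one_lt_of_lt_cof (by rwa [← lift_cof]) hg, fun x =>
    (lt_add_one _).trans_le (le_ciSup ⟨o, by simpa [upperBounds, Order.add_one_le_iff]⟩ x)⟩

theorem exists_lt_forall_lt_of_mk_le_aleph_one {o : Ordinal.{u}} (ho : ℵ₁ < o.cof)
    {D : Set Ordinal.{u}} (hD : #D ≤ ℵ₁) {g : Ordinal.{u} → Ordinal.{u}}
    (hg : ∀ δ ∈ D, g δ < o) : ∃ b < o, ∀ δ ∈ D, g δ < b := by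
  have hcard : Cardinal.lift.{u} #D < Cardinal.lift.{u + 1} o.cof := by
    have := lift_strictMono.{u, u + 1} ho
    simp only [lift_aleph, Ordinal.lift_one] at this
    rw [Cardinal.lift_id'.{u, u + 1}]
    exact hD.trans_lt this
  obtain ⟨b, hbo, hb⟩ := exists_lt_forall_lt_of_lift_mk_lt_cof hcard (g := fun δ : D => g δ)
    fun δ => hg δ δ.2
  exact ⟨b, hbo, fun δ hδ => hb ⟨δ, hδ⟩⟩

theorem cof_omega_two : (ω_ 2).cof = ℵ_ 2 := by
  rw [← ord_aleph, ← one_add_one_eq_two]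
  exact (isRegular_aleph_add_one 1).cof_ord

end Ordinal

theorem IsOmegaLimit.isSuccLimit {δ : Ordinal.{u}} (hδ : IsOmegaLimit δ) : IsSuccLimit δ := by
  obtain ⟨c, hc, rfl⟩ := hδ
  refine Ordinal.isSuccLimit_iff.mpr ⟨(Ordinal.lt_iSup_of_strictMono hc 0).ne_bot,
    isSuccPrelimit_of_succ_lt fun β hβ => ?_⟩
  obtain ⟨n, hn⟩ := Ordinal.lt_iSup_iff.mp hβ
  exact (succ_le_of_lt hn).trans_lt (Ordinal.lt_iSup_of_strictMono hc n)

theorem exists_cofinalIn_le_of_regressive {o : Ordinal.{u}} (ho : ℵ₀ < o.cof)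
    {f : Ordinal.{u} → Ordinal.{u}} (hf : ∀ δ < o, IsOmegaLimit δ → f δ < δ) :
    ∃ η < o, CofinalIn o {δ | IsOmegaLimit δ ∧ f δ ≤ η} := by
  by_contra! h
  have hb : ∀ η < o, ∃ β < o, ∀ δ, IsOmegaLimit δ → f δ ≤ η → β ≤ δ → o ≤ δ := by
    simpa [CofinalIn] using h
  choose! b hbo hb using hb
  have hlim : IsSuccLimit o := Ordinal.one_lt_cof_iff.mp (one_lt_aleph0.trans ho)
  let d : ℕ → Ordinal.{u} := fun n => Nat.rec 0 (fun _ p => succ (max (b p) p)) n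
  have hdo : ∀ n, d n < o := by
    intro n
    induction n with
    | zero => exact hlim.bot_lt
    | succ n ih => exact hlim.succ_lt (max_lt (hbo _ ih) ih)
  have hd : StrictMono d :=
    strictMono_nat_of_lt_succ fun n => (le_max_right _ _).trans_lt (lt_succ _)
  have hδo : ⨆ n, d n < o := Ordinal.iSup_nat_lt ho hdo
  have hδ : IsOmegaLimit (⨆ n, d n) := ⟨d, hd, rfl⟩
  obtain ⟨n, hn⟩ := Ordinal.lt_iSup_iff.mp (hf _ hδo hδ)
  have hbn : b (d n) ≤ ⨆ n, d n :=
    ((le_max_left _ _).trans (le_succ _)).trans (Ordinal.le_iSup d (n + 1))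
  exact (hb _ (hdo n) _ hδ hn.le hbn).not_gt hδo

theorem CofinalIn.exists_cofinalIn_fiber {o : Ordinal.{u}} {S : Set Ordinal.{u}}
    (hS : CofinalIn o S) {α : Type u} (g : Ordinal.{u} → α) {V : Set α}
    (hgV : ∀ δ ∈ S, δ < o → g δ ∈ V) (hV : #V < o.cof) :
    ∃ v, CofinalIn o {δ ∈ S | g δ = v} := by
  by_contra! h
  have hb : ∀ v : V, ∃ β < o, ∀ δ ∈ S, g δ = v → β ≤ δ → o ≤ δ := by
    simpa [CofinalIn] using fun v : V => h v
  choose b hbo hb using hb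
  obtain ⟨β, hβo, hβ⟩ := Ordinal.exists_lt_forall_lt_of_lift_mk_lt_cof (by simpa using hV) hbo
  obtain ⟨δ, hδS, hβδ, hδo⟩ := hS β hβo
  exact (hb ⟨g δ, hgV δ hδS hδo⟩ δ hδS rfl ((hβ _).le.trans hβδ)).not_gt hδo

theorem CofinalIn.exists_uncountable_bounded {o : Ordinal.{u}} (ho : ℵ₁ < o.cof)
    {S : Set Ordinal.{u}} (hS : CofinalIn o S) {h : Ordinal.{u} → Ordinal.{u}}
    (hh : ∀ δ ∈ S, δ < o → h δ < o) :
    ∃ D ⊆ S, ¬ D.Countable ∧ (∃ b < o, ∀ δ ∈ D, δ < b ∧ h δ < b) ∧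
      ∀ δ ∈ D, ∀ δ' ∈ D, δ < δ' → h δ ≤ δ' := by
  have hbdd : ∀ D ⊆ S ∩ Iio o, #D ≤ ℵ₁ → ∃ b < o, ∀ δ ∈ D, δ < b ∧ h δ < b := by
    intro D hD hDc
    obtain ⟨b, hbo, hb⟩ := Ordinal.exists_lt_forall_lt_of_mk_le_aleph_one ho hDc
      (g := fun δ => max δ (h δ)) fun δ hδ => max_lt (hD hδ).2 (hh _ (hD hδ).1 (hD hδ).2)
    exact ⟨b, hbo, fun δ hδ => max_lt_iff.mp (hb δ hδ)⟩
  let 𝒜 : Set (Set Ordinal.{u}) :=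
    {D | D ⊆ S ∩ Iio o ∧ ∀ δ ∈ D, ∀ δ' ∈ D, δ < δ' → h δ ≤ δ'}
  obtain ⟨D, hD⟩ : ∃ D, Maximal (· ∈ 𝒜) D := by
    refine zorn_subset 𝒜 fun c hc𝒜 hc => ⟨⋃₀ c, ⟨sUnion_subset fun D hD => (hc𝒜 hD).1, ?_⟩,
      fun _ => subset_sUnion_of_mem⟩
    rintro δ ⟨D₁, hD₁, hδ⟩ δ' ⟨D₂, hD₂, hδ'⟩
    rcases hc.total hD₁ hD₂ with h₁₂ | h₂₁
    · exact (hc𝒜 hD₂).2 δ (h₁₂ hδ) δ' hδ'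
    · exact (hc𝒜 hD₁).2 δ hδ δ' (h₂₁ hδ')
  have hDc : ℵ₁ < #D := by
    by_contra! hDc
    obtain ⟨b, hbo, hb⟩ := hbdd D hD.prop.1 hDc
    obtain ⟨δ', hδ'S, hbδ', hδ'o⟩ := hS b hbo
    refine (hb δ' (hD.mem_of_prop_insert ⟨insert_subset ⟨hδ'S, hδ'o⟩ hD.prop.1, ?_⟩)).1.not_ge
      hbδ'
    rintro δ₁ (rfl | hδ₁) δ₂ (rfl | hδ₂) h₁₂
    · exact absurd h₁₂ (lt_irrefl _)
    · exact absurd ((hb δ₂ hδ₂).1.trans_le hbδ') h₁₂.asymm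
    · exact (hb δ₁ hδ₁).2.le.trans hbδ'
    · exact hD.prop.2 δ₁ hδ₁ δ₂ hδ₂ h₁₂
  obtain ⟨D', hD'D, hD'⟩ := le_mk_iff_exists_subset.mp hDc.le
  refine ⟨D', fun δ hδ => (hD.prop.1 (hD'D hδ)).1, fun hc => ?_,
    hbdd D' (hD'D.trans hD.prop.1) hD'.le,
    fun δ hδ δ' hδ' => hD.prop.2 δ (hD'D hδ) δ' (hD'D hδ')⟩
  have := mk_le_aleph0_iff.mpr hc.to_subtype
  rw [hD'] at this
  exact this.not_gt aleph0_lt_aleph_one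

theorem mk_setOf_finset_subset_le {α : Type u} (T : Set α) :
    #{s : Finset α | ↑s ⊆ T} ≤ max ℵ₀ #T := by
  classical
  have hrange : {s : Finset α | ↑s ⊆ T} ⊆
      range fun t : Finset T => t.map (Function.Embedding.subtype _) :=
    fun s hs => ⟨s.subtype (· ∈ T), Finset.subtype_map_of_mem fun _ hx => hs hx⟩
  calc #{s : Finset α | ↑s ⊆ T} ≤ #(Finset T) := (mk_le_mk_of_subset hrange).trans mk_range_le
    _ ≤ #(List T) := mk_le_of_surjective fun s => ⟨s.toList, s.toList_toFinset⟩
    _ ≤ max ℵ₀ #T := mk_list_le_max _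

theorem exists_cofinalIn_eq_of_subset_lt {ι : Type u} {o : Ordinal.{u}} (ho : ℵ₀ < o.cof)
    {T : Ordinal.{u} → Set ι} (hT : Monotone T) (hTo : ∀ η < o, #(T η) < o.cof)
    {G : Ordinal.{u} → Finset ι} (hG : ∀ δ < o, IsOmegaLimit δ → ∃ η < δ, ↑(G δ) ⊆ T η) :
    ∃ G₀, CofinalIn o {δ | IsOmegaLimit δ ∧ G δ = G₀} := by
  choose! f hf hfG using hG
  obtain ⟨η, hηo, hη⟩ := exists_cofinalIn_le_of_regressive ho hf
  obtain ⟨G₀, hG₀⟩ := hη.exists_cofinalIn_fiber G (V := {s : Finset ι | (s : Set ι) ⊆ T η})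
    (fun δ hδ hδo => (hfG δ hδo hδ.1).trans (hT hδ.2))
    ((mk_setOf_finset_subset_le _).trans_lt (max_lt ho (hTo η hηo)))
  exact ⟨G₀, hG₀.mono fun δ hδ => ⟨hδ.1.1, hδ.2⟩⟩

/-! ### Sequences of points with countable support -/

section SupportBelow

variable {ι : Type u}

theorem exists_support_subset_forall_mem_closure_image_Ici (q : ℕ → ι → Bool) :
    ∃ z : ι → Bool, {i | z i = true} ⊆ ⋃ n, {i | q n i = true} ∧
      ∀ m, z ∈ closure (q '' Ici m) := by
  obtain ⟨z, hzK, hz⟩ :=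
    (isCompact_setOf_support_subset (⋃ n, {i | q n i = true})).exists_clusterPt
      (f := Filter.map q Filter.atTop)
      (Filter.le_principal_iff.mpr (Filter.mem_map.mpr (Filter.univ_mem' fun n =>
        subset_iUnion (fun n => {i | q n i = true}) n)))
  exact ⟨z, hzK, fun m => clusterPt_iff_forall_mem_closure.mp hz _
    (Filter.image_mem_map (Filter.Ici_mem_atTop m))⟩

def supportBelow (a : Ordinal.{u} → ι → Bool) (η : Ordinal.{u}) : Set ι :=
  ⋃ β < η, {i | a β i = true}

variable {a : Ordinal.{u} → ι → Bool}

theorem supportBelow_mono : Monotone (supportBelow a) := fun _ _ h =>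
  iUnion₂_mono' fun β hβ => ⟨β, hβ.trans_le h, le_rfl⟩

theorem exists_lt_subset_supportBelow {δ : Ordinal.{u}} (hδ : IsSuccLimit δ) {s : Finset ι}
    (hs : ↑s ⊆ supportBelow a δ) : ∃ η < δ, ↑s ⊆ supportBelow a η := by
  have hcover : supportBelow a δ ⊆ ⋃ η ∈ Iio δ, supportBelow a η := by
    refine iUnion₂_subset fun β hβ => ?_
    refine subset_biUnion_of_mem (u := supportBelow a) (mem_Iio.mpr (hδ.succ_lt hβ)) |>.trans' ?_
    exact subset_iUnion₂ (s := fun β' (_ : β' < succ β) => {i | a β' i = true}) β (lt_succ β)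
  refine DirectedOn.exists_mem_subset_of_finset_subset_biUnion (c := Iio δ) ⟨0, hδ.bot_lt⟩
    (fun η₁ h₁ η₂ h₂ => ⟨max η₁ η₂, mem_Iio.mpr (max_lt h₁ h₂),
      supportBelow_mono (le_max_left _ _), supportBelow_mono (le_max_right _ _)⟩)
    (hs.trans hcover)

theorem mk_supportBelow_le {η : Ordinal.{u}} (hη : η < ω_ 2)
    (ha : ∀ β < η, a β ∈ countableSupport ι) : #(supportBelow a η) ≤ ℵ₁ := by
  have hη' : η.card ≤ ℵ₁ := by
    rwa [← ord_aleph, lt_ord, ← one_add_one_eq_two, ← succ_aleph, lt_succ_iff] at hη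
  have h := mk_biUnion_le_lift (fun β => {i | a β i = true}) (Iio η)
  rw [mk_Iio_ordinal, lift_lift] at h
  have hsupp : (⨆ x : Iio η, lift.{u + 1} #{i | a x.1 i = true}) ≤ ℵ₀ :=
    ciSup_le' fun x => by simpa using mk_le_aleph0_iff.mpr (ha x.1 x.2).to_subtype
  have h' := h.trans (mul_le_mul' (lift_le.mpr hη') hsupp)
  rwa [← lift_aleph0.{u + 1, u}, ← lift_mul, lift_le,
    mul_aleph0_eq aleph0_lt_aleph_one.le] at h'

theorem exists_separated_clusterPt {o : Ordinal.{u}} (ha : ∀ β < o, a β ∈ countableSupport ι)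
    (hsep : ∀ δ < o, ∀ z ∈ countableSupport ι, z ∈ closure (a '' Iio δ) →
      z ∉ closure (a '' Ico δ o))
    {δ : Ordinal.{u}} (hδo : δ < o) (hδ : IsOmegaLimit δ) :
    ∃ (z : ι → Bool) (F : Finset ι), {i | z i = true} ⊆ supportBelow a δ ∧
      (∀ η < δ, z ∈ closure (a '' Ico η δ)) ∧ ∀ γ ∈ Ico δ o, ∃ i ∈ F, a γ i ≠ z i := by
  obtain ⟨c, hc, hcδ⟩ := id hδ
  have hcδ' : ∀ n, c n < δ := fun n => hcδ ▸ Ordinal.lt_iSup_of_strictMono hc n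
  obtain ⟨z, hzsupp, hz⟩ := exists_support_subset_forall_mem_closure_image_Ici (a ∘ c)
  have hzT : {i | z i = true} ⊆ supportBelow a δ := hzsupp.trans <| iUnion_subset fun n =>
    subset_iUnion₂ (s := fun β (_ : β < δ) => {i | a β i = true}) (c n) (hcδ' n)
  have hzcl : ∀ η < δ, z ∈ closure (a '' Ico η δ) := by
    intro η hη
    obtain ⟨m, hm⟩ := Ordinal.lt_iSup_iff.mp (hcδ ▸ hη)
    refine closure_mono ?_ (hz m)
    rintro _ ⟨n, hn, rfl⟩
    exact ⟨c n, ⟨hm.le.trans (hc.monotone hn), hcδ' n⟩, rfl⟩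
  have hzY : z ∈ countableSupport ι :=
    (countable_iUnion fun n => ha (c n) ((hcδ' n).trans hδo)).mono hzsupp
  have hzinit : z ∈ closure (a '' Iio δ) :=
    closure_mono (image_mono Ico_subset_Iio_self) (hzcl 0 hδ.isSuccLimit.bot_lt)
  have hztail := hsep δ hδo z hzY hzinit
  rw [mem_closure_pi_iff_forall_finset] at hztail
  push Not at hztail
  obtain ⟨F, hF⟩ := hztail
  exact ⟨z, F, hzT, hzcl, fun γ hγ => hF _ ⟨γ, hγ, rfl⟩⟩

open Classical in
theorem exists_cofinalIn_filter_supportBelow_eq (ha : ∀ β < ω_ 2, a β ∈ countableSupport ι)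
    (z : Ordinal.{u} → ι → Bool) (F : Ordinal.{u} → Finset ι) :
    ∃ (G : Finset ι) (r : G → Bool), CofinalIn (ω_ 2)
      {δ | IsOmegaLimit δ ∧ (F δ).filter (· ∈ supportBelow a δ) = G ∧ ∀ i : G, z δ i = r i} := by
  have ho₁ : ℵ₁ < (ω_ 2).cof := Ordinal.cof_omega_two ▸ aleph_lt_aleph.mpr one_lt_two
  have ho₀ : ℵ₀ < (ω_ 2).cof := aleph0_lt_aleph_one.trans ho₁
  obtain ⟨G, hG⟩ := exists_cofinalIn_eq_of_subset_lt ho₀ supportBelow_mono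
    (fun η hη => (mk_supportBelow_le hη fun β hβ => ha β (hβ.trans hη)).trans_lt ho₁)
    (G := fun δ => (F δ).filter (· ∈ supportBelow a δ))
    (fun δ _ hδ => exists_lt_subset_supportBelow hδ.isSuccLimit
      fun _ hx => (Finset.mem_filter.mp hx).2)
  obtain ⟨r, hr⟩ := hG.exists_cofinalIn_fiber (fun δ (i : G) => z δ i) (V := univ)
    (fun _ _ _ => mem_univ _) (mk_univ.trans_lt ((lt_aleph0_of_finite _).trans ho₀))
  exact ⟨G, r, hr.mono fun δ hδ => ⟨hδ.1.1, hδ.1.2, congrFun hδ.2⟩⟩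

end SupportBelow

theorem exists_eq_true_notMem_of_ne {ι : Type*} {w z₁ z₂ : ι → Bool} {F₁ F₂ : Finset ι}
    {T : Set ι} (hne : ∃ i ∈ F₁, w i ≠ z₁ i) (hz₁ : {i | z₁ i = true} ⊆ T)
    (hw : ∀ i ∈ F₂, w i = z₂ i) (h₁₂ : ∀ i ∈ F₁, i ∈ T → i ∈ F₂ ∧ z₁ i = z₂ i) :
    ∃ i ∈ F₁, w i = true ∧ i ∉ T := by
  obtain ⟨i, hiF, hi⟩ := hne
  have hiT : i ∉ T := fun hiT => hi ((hw i (h₁₂ i hiF hiT).1).trans (h₁₂ i hiF hiT).2.symm)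
  refine ⟨i, hiF, ?_, hiT⟩
  have : z₁ i = false := by simpa using mt (@hz₁ i) hiT
  simpa [this] using hi

theorem injective_of_notMem_of_mem_of_lt {α β : Type*} [LinearOrder α] {f : α → β}
    {S : α → Set β} (hnot : ∀ x, f x ∉ S x) (hmem : ∀ x y, x < y → f x ∈ S y) :
    Function.Injective f := by
  intro x y hxy
  by_contra hne
  rcases lt_or_gt_of_ne hne with h | h
  · exact hnot y (hxy ▸ hmem x y h)
  · exact hnot x (hxy.symm ▸ hmem y x h)

theorem false_of_separated_omega_two {ι : Type u} (a : Ordinal.{u} → ι → Bool)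
    (ha : ∀ β < ω_ 2, a β ∈ countableSupport ι)
    (hsep : ∀ δ < ω_ 2, ∀ z ∈ countableSupport ι, z ∈ closure (a '' Iio δ) →
      z ∉ closure (a '' Ico δ (ω_ 2))) : False := by
  classical
  have ho₁ : ℵ₁ < (ω_ 2).cof := Ordinal.cof_omega_two ▸ aleph_lt_aleph.mpr one_lt_two
  have hlim : IsSuccLimit (ω_ 2) :=
    Ordinal.one_lt_cof_iff.mp (one_lt_aleph0.trans (aleph0_lt_aleph_one.trans ho₁))
  choose! z F hzT hzcl hF using fun δ (hδo : δ < ω_ 2) hδ =>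
    exists_separated_clusterPt ha hsep hδo hδ
  set T := supportBelow a
  obtain ⟨G, r, hW⟩ := exists_cofinalIn_filter_supportBelow_eq ha z F
  choose h hho hh using fun δ => exists_lt_subset_supportBelow (a := a) hlim
    (s := (F δ).filter (· ∈ T (ω_ 2))) fun _ hx => (Finset.mem_filter.mp hx).2
  obtain ⟨D, hDW, hDunc, ⟨b, hbo, hDb⟩, hDh⟩ :=
    hW.exists_uncountable_bounded ho₁ (h := h) fun δ _ _ => hho δ
  obtain ⟨δ', ⟨hδ', hδ'G, hδ'r⟩, hbδ', hδ'o⟩ := hW (succ b) (hlim.succ_lt hbo)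
  obtain ⟨_, ⟨γ, hγ, rfl⟩, hγδ'⟩ := mem_closure_pi_iff_forall_finset.mp
    (hzcl δ' hδ'o hδ' b (lt_of_lt_of_le (lt_succ b) hbδ')) (F δ')
  have key : ∀ δ : D, ∃ i ∈ F δ, a γ i = true ∧ i ∉ T δ := by
    intro ⟨δ, hδD⟩
    obtain ⟨hδ, hδG, hδr⟩ := hDW hδD
    have hδo : δ < ω_ 2 := (hDb δ hδD).1.trans hbo
    refine exists_eq_true_notMem_of_ne (hF δ hδo hδ γ ⟨(hDb δ hδD).1.le.trans hγ.1,
      hγ.2.trans hδ'o⟩) (hzT δ hδo hδ) hγδ' fun j hj hjT => ?_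
    have hjG : j ∈ G := hδG ▸ Finset.mem_filter.mpr ⟨hj, hjT⟩
    exact ⟨(Finset.mem_filter.mp (hδ'G ▸ hjG)).1, (hδr ⟨j, hjG⟩).trans (hδ'r ⟨j, hjG⟩).symm⟩
  choose i hiF hiγ hiT using key
  have hinj : Function.Injective i := injective_of_notMem_of_mem_of_lt hiT fun δ δ'' hδδ'' => by
    have hiT : i δ ∈ T (ω_ 2) := mem_iUnion₂.mpr ⟨γ, hγ.2.trans hδ'o, hiγ δ⟩
    exact supportBelow_mono (hDh δ δ.2 δ'' δ''.2 hδδ'')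
      (hh δ (Finset.mem_filter.mpr ⟨hiF δ, hiT⟩))
  have := (ha γ (hγ.2.trans hδ'o)).to_subtype
  have : Countable D := Function.Injective.countable (β := {j | a γ j = true})
    (f := fun δ => ⟨i δ, hiγ δ⟩) fun δ δ'' h => hinj (congrArg Subtype.val h)
  exact hDunc (countable_coe_iff.mp this)

/-! ### Free sequences -/

theorem IsFreeSequence.injective {Y I : Type u} [TopologicalSpace Y] [LinearOrder I]
    {x : I → Y} (hx : IsFreeSequence Y I x) : Function.Injective x := by
  intro i j hij
  by_contra hne
  wlog h : i < j generalizing i j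
  · exact this hij.symm (Ne.symm hne) (lt_of_le_of_ne (not_lt.mp h) (Ne.symm hne))
  exact disjoint_left.mp (hx j) (subset_closure ⟨i, h, rfl⟩)
    (subset_closure ⟨j, le_rfl, hij.symm⟩)

theorem exists_strictMonoOn_Iio_of_le_type {α : Type u} [LinearOrder α] [WellFoundedLT α]
    [Nonempty α] {o : Ordinal.{u}} (ho : o ≤ Ordinal.type (α := α) (· < ·)) :
    ∃ e : Ordinal.{u} → α, StrictMonoOn e (Iio o) := by
  classical
  refine ⟨fun β => if h : β < Ordinal.type (α := α) (· < ·) then Ordinal.enum (· < ·) ⟨β, h⟩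
    else Classical.arbitrary α, fun β hβ γ hγ hβγ => ?_⟩
  simp only [dif_pos (lt_of_lt_of_le hβ ho), dif_pos (lt_of_lt_of_le hγ ho)]
  exact Ordinal.enum_lt_enum.mpr hβγ

theorem freeSequencesLE_countableSupportWithOne {ι : Type u} :
    FreeSequencesLE (countableSupportWithOne ι) ℵ₁ := by
  intro I _ _ x hx
  by_contra! hI
  set J := {j | (x j : ι → Bool) ≠ fun _ => true}
  have hJ : ℵ₁ < #J := by
    by_contra! hJ
    have hJc : #(Jᶜ : Set I) ≤ 1 := mk_le_one_iff_set_subsingleton.mpr fun j hj k hk =>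
      hx.injective (Subtype.ext ((not_not.mp hj).trans (not_not.mp hk).symm))
    refine hI.not_ge ?_
    calc #I = #(J ∪ Jᶜ : Set I) := by rw [union_compl_self, mk_univ]
      _ ≤ #J + #(Jᶜ : Set I) := mk_union_le _ _
      _ ≤ ℵ₁ + 1 := add_le_add hJ hJc
      _ = ℵ₁ := add_one_eq aleph0_lt_aleph_one.le
  have : Nonempty J := mk_ne_zero_iff.mp ((aleph0_pos.trans aleph0_lt_aleph_one).trans hJ).ne'
  obtain ⟨e, he⟩ := exists_strictMonoOn_Iio_of_le_type (α := J) (o := ω_ 2) (by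
    rwa [← ord_aleph, ord_le, Ordinal.card_type, ← one_add_one_eq_two, ← succ_aleph,
      Order.succ_le_iff])
  set a : Ordinal.{u} → ι → Bool := fun β => x (e β)
  refine false_of_separated_omega_two a (fun β _ => (x (e β)).2.resolve_right (e β).2)
    fun δ hδ z hzY hz hzt => ?_
  have hinit : a '' Iio δ ⊆ Subtype.val '' (x '' {k | k < e δ}) := by
    rintro _ ⟨β, hβ, rfl⟩
    exact ⟨x (e β), ⟨e β, he (hβ.trans hδ) hδ hβ, rfl⟩, rfl⟩
  have htail : a '' Ico δ (ω_ 2) ⊆ Subtype.val '' (x '' {k | e δ ≤ k}) := by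
    rintro _ ⟨β, hβ, rfl⟩
    exact ⟨x (e β), ⟨e β, he.monotoneOn hδ hβ.2 hβ.1, rfl⟩, rfl⟩
  let z' : countableSupportWithOne ι := ⟨z, countableSupport_subset_withOne hzY⟩
  exact (hx (e δ)).notMem_of_mem_left (a := z') (closure_subtype.mpr (closure_mono hinit hz))
    (closure_subtype.mpr (closure_mono htail hzt))

/-- For `κ > ω₁`, let `Y = {x ∈ 2^κ : |x⁻¹(1)| ≤ ℵ₀}` and `X = Y ∪ {𝟏}` with the subspace
topology from `2^κ`, where `𝟏` is the constant-one function. Then `X` is countably compact,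
`t(X) = κ` (the tightness is at most `κ` but not at most any smaller cardinal), and
`F(X) ≤ ω₁`. -/
theorem countably_compact_small_free_sequences_large_tightness
    (κ : Cardinal.{u}) (hκ : aleph 1 < κ)
    (ι : Type u) (hι : #ι = κ)
    (X : Set (ι → Bool))
    (hX : X = {x | {i | x i = true}.Countable} ∪ {fun _ => true}) :
    CountablyCompact ↥X ∧
    TightnessLE ↥X κ ∧ (∀ μ : Cardinal.{u}, μ < κ → ¬ TightnessLE ↥X μ) ∧
    FreeSequencesLE ↥X (aleph 1) := by
  subst hX hι
  have hℵ₀ : ℵ₀ < #ι := aleph0_lt_aleph_one.trans hκ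
  have : Infinite ι := infinite_iff.mpr hℵ₀.le
  exact ⟨countablyCompact_countableSupportWithOne, tightnessLE_mk_of_infinite _,
    fun μ hμ => not_tightnessLE_countableSupportWithOne hμ hℵ₀,
    freeSequencesLE_countableSupportWithOne⟩
end
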